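/- arXiv:1503.07272 — 2 statements merged into one kernel-verified Lean document; each statement's English description precedes it below -/
import Mathlib

section
/- Existence of a smooth minorant of the isoperimetric profile: let n >= 2 be an integer, beta in (0,1], v_m in (0,1), and let I : [0,1] -> [0,infinity) be continuous, satisfy I(v) = I(1-v) for all v in [0,1], and I(v) >= C_1 * min{v, 1-v}^{(n-1)/n} for all v in [0,1] and some C_1 > 0; suppose moreover that I is differentiable at v_m and |I(v) - I(v_m) - I'(v_m)(v - v_m)| <= C_0 |v - v_m|^{1+beta} for all v in a neighborhood of v_m, for some C_0 > 0. Then there exists a function I* : (0,1) -> R which is continuously differentiable with derivative locally beta-Hoelder continuous on (0,1), such that: I*(v) = I*(1-v) for all v in (0,1); 0 < I*(v) <= I(v) for all v in (0,1); I*(v_m) = I(v_m) and (I*)'(v_m) = I'(v_m); and there exist C > 0 and delta in (0,1) with I*(v) = C * v^{(n-1)/n} for all v in (0,delta). -/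
open Set


open Set Filter Topology

namespace SmoothMinorantAux

noncomputable def F (β : ℝ) (x : ℝ) : ℝ := Real.sign x * |x| ^ β

lemma F_zero (β : ℝ) : F β 0 = 0 := by simp [F]

lemma F_of_nonneg {β : ℝ} (hβ0 : 0 < β) {x : ℝ} (hx : 0 ≤ x) : F β x = x ^ β := by
  rcases hx.eq_or_lt with h | h
  · simp [F, ← h, Real.zero_rpow hβ0.ne']
  · simp [F, Real.sign_of_pos h, abs_of_pos h]

lemma F_neg (β x : ℝ) : F β (-x) = - F β x := by
  simp [F, Real.sign_neg, abs_neg, neg_mul]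

lemma rpow_sub_le {β a b : ℝ} (hβ0 : 0 < β) (hβ1 : β ≤ 1) (ha : 0 ≤ a) (hab : a ≤ b) :
    b ^ β - a ^ β ≤ (b - a) ^ β := by
  have hb : 0 ≤ b - a := by linarith
  have h := NNReal.rpow_add_le_add_rpow (Real.toNNReal (b - a)) (Real.toNNReal a) hβ0.le hβ1
  have h2 := NNReal.coe_le_coe.2 h
  push_cast [NNReal.coe_rpow, Real.coe_toNNReal _ hb, Real.coe_toNNReal _ ha] at h2
  have hba : b - a + a = b := by ring
  rw [hba] at h2
  linarith

lemma abs_rpow_sub_rpow_le {β a b : ℝ} (hβ0 : 0 < β) (hβ1 : β ≤ 1) (ha : 0 ≤ a) (hb : 0 ≤ b) :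
    |a ^ β - b ^ β| ≤ |a - b| ^ β := by
  rcases le_total a b with h | h
  · have h1 : a ^ β ≤ b ^ β := Real.rpow_le_rpow ha h hβ0.le
    rw [abs_of_nonpos (by linarith), abs_of_nonpos (by linarith)]
    have := rpow_sub_le hβ0 hβ1 ha h
    rw [neg_sub, neg_sub]
    exact this
  · have h1 : b ^ β ≤ a ^ β := Real.rpow_le_rpow hb h hβ0.le
    rw [abs_of_nonneg (by linarith), abs_of_nonneg (by linarith)]
    exact rpow_sub_le hβ0 hβ1 hb h

lemma F_holder {β : ℝ} (hβ0 : 0 < β) (hβ1 : β ≤ 1) (x y : ℝ) :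
    |F β x - F β y| ≤ 2 * |x - y| ^ β := by
  have hmix : ∀ a b : ℝ, 0 ≤ a → b ≤ 0 → |F β a - F β b| ≤ 2 * |a - b| ^ β := by
    intro a b ha hb
    have hFb : F β b = -((-b) ^ β) := by
      rw [show b = -(-b) by ring, F_neg, F_of_nonneg hβ0 (by linarith)]
      ring_nf
    rw [F_of_nonneg hβ0 ha, hFb]
    have h1 : a ^ β ≤ (a - b) ^ β := Real.rpow_le_rpow ha (by linarith) hβ0.le
    have h2 : (-b) ^ β ≤ (a - b) ^ β := Real.rpow_le_rpow (by linarith) (by linarith) hβ0.le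
    have h3 : 0 ≤ a ^ β := Real.rpow_nonneg ha β
    have h4 : 0 ≤ (-b) ^ β := Real.rpow_nonneg (by linarith) β
    rw [sub_neg_eq_add, abs_of_nonneg (by linarith), abs_of_nonneg (by linarith : (0:ℝ) ≤ a - b)]
    linarith
  rcases le_total 0 x with hx | hx <;> rcases le_total 0 y with hy | hy
  · rw [F_of_nonneg hβ0 hx, F_of_nonneg hβ0 hy]
    have h := abs_rpow_sub_rpow_le hβ0 hβ1 hx hy
    have h2 : 0 ≤ |x - y| ^ β := Real.rpow_nonneg (abs_nonneg _) β
    linarith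
  · exact hmix x y hx hy
  · have h := hmix y x hy hx
    rw [abs_sub_comm, abs_sub_comm x y]
    exact h
  · have hxn : (0:ℝ) ≤ -x := neg_nonneg.2 hx
    have hyn : (0:ℝ) ≤ -y := neg_nonneg.2 hy
    have ex : F β x = -((-x) ^ β) := by
      have h := F_neg β (-x)
      rw [neg_neg] at h
      rw [h, F_of_nonneg hβ0 hxn]
    have ey : F β y = -((-y) ^ β) := by
      have h := F_neg β (-y)
      rw [neg_neg] at h
      rw [h, F_of_nonneg hβ0 hyn]
    rw [ex, ey, show -((-x) ^ β) - -((-y) ^ β) = -((-x) ^ β - (-y) ^ β) by ring, abs_neg]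
    have h := abs_rpow_sub_rpow_le hβ0 hβ1 hxn hyn
    rw [show -x - -y = -(x - y) by ring, abs_neg] at h
    have h2 : 0 ≤ |x - y| ^ β := Real.rpow_nonneg (abs_nonneg _) β
    linarith

lemma F_abs_le {β : ℝ} (hβ0 : 0 < β) (x : ℝ) : |F β x| ≤ |x| ^ β := by
  rw [F, abs_mul, abs_of_nonneg (Real.rpow_nonneg (abs_nonneg x) β)]
  have h : |Real.sign x| ≤ 1 := by
    rcases lt_trichotomy x 0 with h | h | h <;>
      simp [Real.sign_of_neg, Real.sign_of_pos, *]
  have h2 : 0 ≤ |x| ^ β := Real.rpow_nonneg (abs_nonneg x) β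
  nlinarith

lemma F_continuous {β : ℝ} (hβ0 : 0 < β) (hβ1 : β ≤ 1) : Continuous (F β) := by
  rw [continuous_iff_continuousAt]
  intro x
  rw [ContinuousAt, tendsto_iff_norm_sub_tendsto_zero]
  have hb : Tendsto (fun y : ℝ => 2 * |y - x| ^ β) (𝓝 x) (𝓝 0) := by
    have hc : Continuous fun y : ℝ => 2 * |y - x| ^ β :=
      continuous_const.mul ((Real.continuous_rpow_const hβ0.le).comp
        (continuous_abs.comp (continuous_id.sub continuous_const)))
    have h := hc.tendsto x
    simpa [Real.zero_rpow hβ0.ne'] using h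
  refine squeeze_zero (fun y => norm_nonneg _) (fun y => ?_) hb
  simpa [Real.norm_eq_abs] using F_holder hβ0 hβ1 y x

lemma hasDerivAt_abs_rpow {β : ℝ} (hβ0 : 0 < β) (x : ℝ) :
    HasDerivAt (fun t : ℝ => |t| ^ (1 + β)) ((1 + β) * F β x) x := by
  rcases lt_trichotomy x 0 with hx | hx | hx
  · have hneg : HasDerivAt (fun t : ℝ => -t) (-1) x := (hasDerivAt_id x).neg
    have h2 : HasDerivAt (fun s : ℝ => s ^ (1 + β)) ((1 + β) * (-x) ^ (1 + β - 1)) (-x) :=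
      Real.hasDerivAt_rpow_const (Or.inl (neg_ne_zero.2 hx.ne))
    have h3 := h2.comp x hneg
    have h1 : HasDerivAt (fun t : ℝ => (-t) ^ (1 + β)) (-((1 + β) * (-x) ^ β)) x := by
      simpa [Function.comp_def, show 1 + β - 1 = β by ring] using h3
    have hev : (fun t : ℝ => |t| ^ (1 + β)) =ᶠ[𝓝 x] fun t : ℝ => (-t) ^ (1 + β) := by
      filter_upwards [Iio_mem_nhds hx] with t ht
      rw [abs_of_neg ht]
    have h4 := h1.congr_of_eventuallyEq hev
    refine h4.congr_deriv ?_
    rw [F, Real.sign_of_neg hx, abs_of_neg hx]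
    ring
  · subst hx
    rw [hasDerivAt_iff_tendsto_slope, F_zero, mul_zero]
    have h0 : Tendsto (fun y : ℝ => |y| ^ β) (𝓝[≠] (0:ℝ)) (𝓝 0) := by
      have hc : Continuous fun y : ℝ => |y| ^ β :=
        (Real.continuous_rpow_const hβ0.le).comp continuous_abs
      have h := hc.tendsto 0
      rw [show |(0:ℝ)| ^ β = 0 by simp [Real.zero_rpow hβ0.ne']] at h
      exact h.mono_left nhdsWithin_le_nhds
    refine squeeze_zero_norm' ?_ h0
    filter_upwards [self_mem_nhdsWithin] with y (hy : y ≠ (0:ℝ))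
    have hay : (0:ℝ) < |y| := abs_pos.2 hy
    have hslope : slope (fun t : ℝ => |t| ^ (1 + β)) 0 y = |y| ^ (1 + β) / y := by
      rw [slope_def_field]
      simp [Real.zero_rpow (by positivity : (1:ℝ) + β ≠ 0)]
    rw [hslope, Real.norm_eq_abs, abs_div]
    rw [show (1:ℝ) + β = β + 1 by ring, Real.rpow_add hay, Real.rpow_one,
      abs_of_nonneg (mul_nonneg (Real.rpow_nonneg (abs_nonneg y) β) (abs_nonneg y))]
    rw [mul_div_assoc, div_self hay.ne', mul_one]
  · have h2 : HasDerivAt (fun s : ℝ => s ^ (1 + β)) ((1 + β) * x ^ (1 + β - 1)) x :=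
      Real.hasDerivAt_rpow_const (Or.inl hx.ne')
    have hev : (fun t : ℝ => |t| ^ (1 + β)) =ᶠ[𝓝 x] fun t : ℝ => t ^ (1 + β) := by
      filter_upwards [Ioi_mem_nhds hx] with t ht
      rw [abs_of_pos ht]
    have h4 := h2.congr_of_eventuallyEq hev
    refine h4.congr_deriv ?_
    rw [F, Real.sign_of_pos hx, abs_of_pos hx, show 1 + β - 1 = β by ring]
    ring

/-- A pair of a function and its derivative on `(0,1)`, with continuous derivative which is
`β`-Hölder on compact subsets. -/
def GoodPair (β : ℝ) (f f' : ℝ → ℝ) : Prop :=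
  (∀ x ∈ Ioo (0:ℝ) 1, HasDerivAt f (f' x) x) ∧ ContinuousOn f' (Ioo 0 1) ∧
    ∀ K : Set ℝ, K ⊆ Ioo (0:ℝ) 1 → IsCompact K →
      ∃ C : ℝ, ∀ x ∈ K, ∀ y ∈ K, |f' x - f' y| ≤ C * |x - y| ^ β

lemma compact_subset_Icc {K : Set ℝ} (hK : K ⊆ Ioo (0:ℝ) 1) (hKc : IsCompact K)
    (hne : K.Nonempty) : ∃ a b : ℝ, K ⊆ Icc a b ∧ Icc a b ⊆ Ioo (0:ℝ) 1 := by
  refine ⟨sInf K, sSup K, fun x hx => ⟨csInf_le hKc.bddBelow hx, le_csSup hKc.bddAbove hx⟩,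
    fun x hx => ⟨lt_of_lt_of_le (hK (hKc.sInf_mem hne)).1 hx.1,
      lt_of_le_of_lt hx.2 (hK (hKc.sSup_mem hne)).2⟩⟩

lemma rpow_self_le {β t : ℝ} (hβ1 : β ≤ 1) (ht0 : 0 ≤ t) (ht1 : t ≤ 1) : t ≤ t ^ β := by
  rcases ht0.eq_or_lt with h | h
  · rw [← h]; exact Real.rpow_nonneg le_rfl β
  · calc t = t ^ (1:ℝ) := (Real.rpow_one t).symm
      _ ≤ t ^ β := Real.rpow_le_rpow_of_exponent_ge h ht1 hβ1

lemma holder_step {β : ℝ} (hβ1 : β ≤ 1) {f f' : ℝ → ℝ} {a b : ℝ}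
    (hab : Icc a b ⊆ Ioo (0:ℝ) 1)
    (hd : ∀ x ∈ Ioo (0:ℝ) 1, HasDerivAt f (f' x) x)
    (hc : ContinuousOn f' (Ioo 0 1)) :
    ∃ C : ℝ, 0 ≤ C ∧ ∀ x ∈ Icc a b, ∀ y ∈ Icc a b, |f x - f y| ≤ C * |x - y| ^ β := by
  obtain ⟨M, hM⟩ := isCompact_Icc.exists_bound_of_continuousOn (hc.mono hab)
  refine ⟨max M 0, le_max_right _ _, fun x hx y hy => ?_⟩
  have hdiff : ∀ z ∈ Icc a b, DifferentiableAt ℝ f z := fun z hz =>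
    (hd z (hab hz)).differentiableAt
  have hbd : ∀ z ∈ Icc a b, ‖deriv f z‖ ≤ max M 0 := fun z hz => by
    rw [(hd z (hab hz)).deriv]
    exact (hM z hz).trans (le_max_left _ _)
  have key := (convex_Icc a b).norm_image_sub_le_of_norm_deriv_le hdiff hbd hy hx
  rw [Real.norm_eq_abs, Real.norm_eq_abs] at key
  have hxy1 : |x - y| ≤ 1 := by
    obtain ⟨h1a, h1b⟩ := hab hx
    obtain ⟨h2a, h2b⟩ := hab hy
    rw [abs_le]; constructor <;> linarith
  have h3 : |x - y| ≤ |x - y| ^ β := rpow_self_le hβ1 (abs_nonneg _) hxy1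
  calc |f x - f y| ≤ max M 0 * |x - y| := key
    _ ≤ max M 0 * |x - y| ^ β := by
        exact mul_le_mul_of_nonneg_left h3 (le_max_right _ _)

lemma GoodPair.of_contDiffOn {β : ℝ} (hβ1 : β ≤ 1) {f : ℝ → ℝ}
    (hf : ContDiffOn ℝ 2 f (Ioo 0 1)) : GoodPair β f (deriv f) := by
  have hdiff : DifferentiableOn ℝ f (Ioo 0 1) := hf.differentiableOn (by norm_num)
  have hd : ∀ x ∈ Ioo (0:ℝ) 1, HasDerivAt f (deriv f x) x := fun x hx =>
    ((hdiff.differentiableAt (Ioo_mem_nhds hx.1 hx.2)).hasDerivAt)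
  have hg : ContDiffOn ℝ 1 (deriv f) (Ioo 0 1) :=
    hf.deriv_of_isOpen isOpen_Ioo (by norm_num)
  refine ⟨hd, hg.continuousOn, fun K hK hKc => ?_⟩
  rcases K.eq_empty_or_nonempty with rfl | hne
  · exact ⟨0, by simp⟩
  obtain ⟨a, b, hKab, hab⟩ := compact_subset_Icc hK hKc hne
  have hd2 : ∀ x ∈ Ioo (0:ℝ) 1, HasDerivAt (deriv f) (deriv (deriv f) x) x := fun x hx =>
    (((hg.differentiableOn one_ne_zero).differentiableAt (Ioo_mem_nhds hx.1 hx.2)).hasDerivAt)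
  have hc2 : ContinuousOn (deriv (deriv f)) (Ioo 0 1) :=
    hg.continuousOn_deriv_of_isOpen isOpen_Ioo le_rfl
  obtain ⟨C, _, hC⟩ := holder_step hβ1 hab hd2 hc2
  exact ⟨C, fun x hx y hy => hC x (hKab hx) y (hKab hy)⟩

lemma GoodPair.sub {β : ℝ} {f f' g g' : ℝ → ℝ} (hf : GoodPair β f f') (hg : GoodPair β g g') :
    GoodPair β (fun x => f x - g x) (fun x => f' x - g' x) := by
  refine ⟨fun x hx => (hf.1 x hx).sub (hg.1 x hx), hf.2.1.sub hg.2.1, fun K hK hKc => ?_⟩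
  obtain ⟨Cf, hCf⟩ := hf.2.2 K hK hKc
  obtain ⟨Cg, hCg⟩ := hg.2.2 K hK hKc
  refine ⟨Cf + Cg, fun x hx y hy => ?_⟩
  have h1 := hCf x hx y hy
  have h2 := hCg x hx y hy
  have h3 : |f' x - g' x - (f' y - g' y)| ≤ |f' x - f' y| + |g' x - g' y| := by
    rw [show f' x - g' x - (f' y - g' y) = (f' x - f' y) - (g' x - g' y) by ring]
    exact abs_sub _ _
  rw [add_mul]
  linarith

lemma GoodPair.const_mul {β : ℝ} {f f' : ℝ → ℝ} (c : ℝ) (hf : GoodPair β f f') :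
    GoodPair β (fun x => c * f x) (fun x => c * f' x) := by
  refine ⟨fun x hx => (hf.1 x hx).const_mul c, hf.2.1.const_smul c, fun K hK hKc => ?_⟩
  obtain ⟨C, hC⟩ := hf.2.2 K hK hKc
  refine ⟨|c| * C, fun x hx y hy => ?_⟩
  rw [← mul_sub, abs_mul, mul_assoc]
  exact mul_le_mul_of_nonneg_left (hC x hx y hy) (abs_nonneg c)

lemma GoodPair.mul {β : ℝ} (hβ1 : β ≤ 1) {f f' g g' : ℝ → ℝ}
    (hf : GoodPair β f f') (hg : GoodPair β g g') :
    GoodPair β (fun x => f x * g x) (fun x => f' x * g x + f x * g' x) := by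
  have hfc : ContinuousOn f (Ioo 0 1) := fun x hx =>
    (hf.1 x hx).differentiableAt.continuousAt.continuousWithinAt
  have hgc : ContinuousOn g (Ioo 0 1) := fun x hx =>
    (hg.1 x hx).differentiableAt.continuousAt.continuousWithinAt
  refine ⟨fun x hx => (hf.1 x hx).mul (hg.1 x hx),
    (hf.2.1.mul hgc).add (hfc.mul hg.2.1), fun K hK hKc => ?_⟩
  rcases K.eq_empty_or_nonempty with rfl | hne
  · exact ⟨0, by simp⟩
  obtain ⟨a, b, hKab, hab⟩ := compact_subset_Icc hK hKc hne
  obtain ⟨Bf, hBf⟩ := isCompact_Icc.exists_bound_of_continuousOn (hfc.mono hab)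
  obtain ⟨Bg, hBg⟩ := isCompact_Icc.exists_bound_of_continuousOn (hgc.mono hab)
  obtain ⟨Bf', hBf'⟩ := isCompact_Icc.exists_bound_of_continuousOn (hf.2.1.mono hab)
  obtain ⟨Bg', hBg'⟩ := isCompact_Icc.exists_bound_of_continuousOn (hg.2.1.mono hab)
  obtain ⟨Hf, hHf⟩ := hf.2.2 (Icc a b) hab isCompact_Icc
  obtain ⟨Hg, hHg⟩ := hg.2.2 (Icc a b) hab isCompact_Icc
  obtain ⟨Lf, hLf0, hLf⟩ := holder_step hβ1 hab hf.1 hf.2.1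
  obtain ⟨Lg, hLg0, hLg⟩ := holder_step hβ1 hab hg.1 hg.2.1
  refine ⟨Bf' * Lg + Bg * Hf + Bf * Hg + Bg' * Lf, fun x hx y hy => ?_⟩
  have hx' := hKab hx
  have hy' := hKab hy
  have e1 : f' x * g x + f x * g' x - (f' y * g y + f y * g' y)
      = f' x * (g x - g y) + g y * (f' x - f' y) + f x * (g' x - g' y) + g' y * (f x - f y) := by
    ring
  have t1 : |f' x * (g x - g y)| ≤ Bf' * (Lg * |x - y| ^ β) := by
    rw [abs_mul]
    exact mul_le_mul (by simpa using hBf' x hx') (hLg x hx' y hy') (abs_nonneg _)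
      ((norm_nonneg _).trans (hBf' x hx'))
  have t2 : |g y * (f' x - f' y)| ≤ Bg * (Hf * |x - y| ^ β) := by
    rw [abs_mul]
    exact mul_le_mul (by simpa using hBg y hy') (hHf x hx' y hy') (abs_nonneg _)
      ((norm_nonneg _).trans (hBg y hy'))
  have t3 : |f x * (g' x - g' y)| ≤ Bf * (Hg * |x - y| ^ β) := by
    rw [abs_mul]
    exact mul_le_mul (by simpa using hBf x hx') (hHg x hx' y hy') (abs_nonneg _)
      ((norm_nonneg _).trans (hBf x hx'))
  have t4 : |g' y * (f x - f y)| ≤ Bg' * (Lf * |x - y| ^ β) := by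
    rw [abs_mul]
    exact mul_le_mul (by simpa using hBg' y hy') (hLf x hx' y hy') (abs_nonneg _)
      ((norm_nonneg _).trans (hBg' y hy'))
  calc |f' x * g x + f x * g' x - (f' y * g y + f y * g' y)|
      ≤ |f' x * (g x - g y)| + |g y * (f' x - f' y)| + |f x * (g' x - g' y)|
        + |g' y * (f x - f y)| := by
          rw [e1]
          exact (abs_add_le _ _).trans (add_le_add_left ((abs_add_le _ _).trans
            (add_le_add_left (abs_add_le _ _) _)) _)
    _ ≤ (Bf' * Lg + Bg * Hf + Bf * Hg + Bg' * Lf) * |x - y| ^ β := by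
          rw [add_mul, add_mul, add_mul]
          have := t1; have := t2; have := t3; have := t4
          nlinarith [t1, t2, t3, t4]

lemma GoodPair.contDiffOn {β : ℝ} {f f' : ℝ → ℝ} (hp : GoodPair β f f') :
    ContDiffOn ℝ 1 f (Ioo 0 1) := by
  rw [show (1 : WithTop ℕ∞) = 0 + 1 from rfl, contDiffOn_succ_iff_deriv_of_isOpen isOpen_Ioo]
  refine ⟨fun x hx => (hp.1 x hx).differentiableAt.differentiableWithinAt,
    fun h => by simp at h, ?_⟩
  rw [contDiffOn_zero]
  exact hp.2.1.congr fun x hx => (hp.1 x hx).deriv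

end SmoothMinorantAux

set_option maxHeartbeats 2000000 in
open SmoothMinorantAux in
/-- **Existence of a smooth minorant of the isoperimetric profile.**
Given a continuous, symmetric isoperimetric-type function `I` on `[0,1]` bounded below by
`C₁ * min(v, 1-v)^((n-1)/n)`, which is differentiable at `vm` with a first-order Taylor
expansion with remainder `O(|v - vm|^(1+β))`, there is a function `Istar` of class `C^{1,β}_loc`
on `(0,1)` with `0 < Istar ≤ I` on `(0,1)`, symmetric about `1/2`, touching `I` to first order
at `vm`, and equal to `C * v^((n-1)/n)` near `0`. -/
theorem smooth_minorant_of_isoperimetric_profile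
    (n : ℕ) (hn : 2 ≤ n)
    (β : ℝ) (hβ : β ∈ Set.Ioc (0 : ℝ) 1)
    (vm : ℝ) (hvm : vm ∈ Set.Ioo (0 : ℝ) 1)
    (I : ℝ → ℝ)
    (hIcont : ContinuousOn I (Set.Icc 0 1))
    (hInonneg : ∀ v ∈ Set.Icc (0 : ℝ) 1, 0 ≤ I v)
    (hIsymm : ∀ v ∈ Set.Icc (0 : ℝ) 1, I v = I (1 - v))
    (C₁ : ℝ) (hC₁ : 0 < C₁)
    (hIlow : ∀ v ∈ Set.Icc (0 : ℝ) 1,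
      C₁ * (min v (1 - v)) ^ (((n : ℝ) - 1) / n) ≤ I v)
    (d : ℝ) (hId : HasDerivAt I d vm)
    (C₀ : ℝ) (hC₀ : 0 < C₀)
    (ρ : ℝ) (hρ : 0 < ρ)
    (hTaylor : ∀ v : ℝ, |v - vm| < ρ →
      |I v - I vm - d * (v - vm)| ≤ C₀ * |v - vm| ^ (1 + β)) :
    ∃ Istar : ℝ → ℝ,
      -- `Istar` is `C¹` on `(0,1)` with locally `β`-Hölder derivative
      ContDiffOn ℝ 1 Istar (Set.Ioo 0 1) ∧
      (∀ K : Set ℝ, K ⊆ Set.Ioo (0 : ℝ) 1 → IsCompact K →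
        ∃ C : ℝ, ∀ x ∈ K, ∀ y ∈ K, |deriv Istar x - deriv Istar y| ≤ C * |x - y| ^ β) ∧
      -- symmetry
      (∀ v ∈ Set.Ioo (0 : ℝ) 1, Istar v = Istar (1 - v)) ∧
      -- positivity and minorant property
      (∀ v ∈ Set.Ioo (0 : ℝ) 1, 0 < Istar v ∧ Istar v ≤ I v) ∧
      -- first-order contact at `vm`
      Istar vm = I vm ∧ HasDerivAt Istar d vm ∧
      -- explicit power-law form near `0`
      (∃ C > 0, ∃ δ ∈ Set.Ioo (0 : ℝ) 1, ∀ v ∈ Set.Ioo (0 : ℝ) δ,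
        Istar v = C * v ^ (((n : ℝ) - 1) / n)) := by
  classical
  obtain ⟨hβ0, hβ1⟩ := hβ
  obtain ⟨hvm0, hvm1⟩ := hvm
  set α : ℝ := ((n : ℝ) - 1) / n with hα_def
  have hn2 : (2:ℝ) ≤ (n:ℝ) := by exact_mod_cast hn
  have hα0 : 0 < α := by rw [hα_def]; apply div_pos <;> linarith
  have hα1 : α ≤ 1 := by rw [hα_def, div_le_one (by linarith)]; linarith
  have hIvm : 0 < I vm := by
    have h1 := hIlow vm ⟨hvm0.le, hvm1.le⟩
    have h2 : 0 < min vm (1 - vm) := lt_min hvm0 (by linarith)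
    have h3 : 0 < C₁ * min vm (1 - vm) ^ α := mul_pos hC₁ (Real.rpow_pos_of_pos h2 α)
    linarith
  have hD : 0 < |d| + C₀ := add_pos_of_nonneg_of_pos (abs_nonneg d) hC₀
  set r0 : ℝ := min (min vm (1 - vm)) (min ρ (min 1 (I vm / (2 * (|d| + C₀))))) with hr0_def
  have hr00 : 0 < r0 := by
    rw [hr0_def]
    exact lt_min (lt_min hvm0 (by linarith)) (lt_min hρ (lt_min one_pos (by positivity)))
  set r : ℝ := if vm = 1/2 then r0/2 else min (r0/2) (|vm - 1/2|) with hr_def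
  have hr : 0 < r := by
    rw [hr_def]; split_ifs with h
    · linarith
    · exact lt_min (by linarith) (abs_pos.2 (sub_ne_zero.2 h))
  have hrr0 : r ≤ r0 / 2 := by
    rw [hr_def]; split_ifs
    exacts [le_rfl, min_le_left _ _]
  have hrvm : r < vm := by
    have h2 : r0 ≤ vm := by rw [hr0_def]; exact le_trans (min_le_left _ _) (min_le_left _ _)
    linarith
  have hrvm1 : r < 1 - vm := by
    have h2 : r0 ≤ 1 - vm := by rw [hr0_def]; exact le_trans (min_le_left _ _) (min_le_right _ _)
    linarith
  have hrρ : r < ρ := by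
    have h2 : r0 ≤ ρ := by rw [hr0_def]; exact le_trans (min_le_right _ _) (min_le_left _ _)
    linarith
  have hr1 : r ≤ 1 := by
    have h2 : r0 ≤ 1 := by
      rw [hr0_def]
      exact le_trans (min_le_right _ _) (le_trans (min_le_right _ _) (min_le_left _ _))
    linarith
  have hrD : (|d| + C₀) * r ≤ I vm / 2 := by
    have h1 : r0 ≤ I vm / (2 * (|d| + C₀)) := by
      rw [hr0_def]
      exact le_trans (min_le_right _ _) (le_trans (min_le_right _ _) (min_le_right _ _))
    have h2 : r ≤ I vm / (2 * (|d| + C₀)) := by linarith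
    have h3 : (|d| + C₀) * (I vm / (2 * (|d| + C₀))) = I vm / 2 := by
      field_simp
    calc (|d| + C₀) * r ≤ (|d| + C₀) * (I vm / (2 * (|d| + C₀))) :=
          mul_le_mul_of_nonneg_left h2 hD.le
      _ = I vm / 2 := h3
  have hrhalf : vm ≠ 1/2 → r ≤ |vm - 1/2| := by
    intro h; rw [hr_def, if_neg h]; exact min_le_right _ _
  -- the bump function
  set χb : ContDiffBump vm := ⟨r/2, r, half_pos hr, half_lt_self hr⟩ with hχb_def
  set χ : ℝ → ℝ := fun x => χb x with hχ_def
  have hχ1 : ∀ x : ℝ, |x - vm| ≤ r/2 → χ x = 1 := by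
    intro x hx
    apply χb.one_of_mem_closedBall
    rw [Metric.mem_closedBall, Real.dist_eq, hχb_def]
    exact hx
  have hχ0 : ∀ x : ℝ, r ≤ |x - vm| → χ x = 0 := by
    intro x hx
    apply χb.zero_of_le_dist
    rw [Real.dist_eq, hχb_def]
    exact hx
  have hχsupp : ∀ x : ℝ, χ x ≠ 0 → |x - vm| < r := by
    intro x hx
    have h1 : x ∈ Function.support χb := Function.mem_support.2 hx
    rw [χb.support_eq] at h1
    have := Metric.mem_ball.1 h1
    rw [Real.dist_eq] at this
    rw [hχb_def] at this
    exact this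
  have hχnn : ∀ x : ℝ, 0 ≤ χ x := fun x => χb.nonneg
  have hχle : ∀ x : ℝ, χ x ≤ 1 := fun x => χb.le_one
  have hχcd : ContDiff ℝ 2 χ := χb.contDiff
  -- the base profile b
  set ψ : ℝ → ℝ := fun v => Real.smoothTransition (2 - 3*v) with hψ_def
  have hψ_nonneg : ∀ v : ℝ, 0 ≤ ψ v := fun v => Real.smoothTransition.nonneg _
  have hψ_le : ∀ v : ℝ, ψ v ≤ 1 := fun v => Real.smoothTransition.le_one _
  have hψ_one : ∀ v : ℝ, v ≤ 1/3 → ψ v = 1 := fun v hv =>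
    Real.smoothTransition.one_of_one_le (by linarith)
  have hψ_zero : ∀ v : ℝ, 2/3 ≤ v → ψ v = 0 := fun v hv =>
    Real.smoothTransition.zero_of_nonpos (by linarith)
  have hψ_pos : ∀ v : ℝ, v < 2/3 → 0 < ψ v := fun v hv =>
    Real.smoothTransition.pos_of_pos (by linarith)
  set b : ℝ → ℝ := fun v => ψ v * v ^ α + ψ (1 - v) * (1 - v) ^ α with hb_def
  have hb_symm : ∀ v : ℝ, b (1 - v) = b v := by
    intro v
    simp only [hb_def]
    rw [show (1:ℝ) - (1 - v) = v by ring]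
    ring
  have hb_pos : ∀ v ∈ Ioo (0:ℝ) 1, 0 < b v := by
    intro v hv
    simp only [hb_def]
    rcases le_or_gt v (1/2) with h | h
    · have h1 : 0 < ψ v := hψ_pos v (by linarith)
      have h2 : 0 < v ^ α := Real.rpow_pos_of_pos hv.1 α
      have h3 : 0 ≤ ψ (1 - v) * (1 - v) ^ α :=
        mul_nonneg (hψ_nonneg _) (Real.rpow_nonneg (by linarith [hv.2]) α)
      nlinarith
    · have h1 : 0 < ψ (1 - v) := hψ_pos (1 - v) (by linarith)
      have h2 : 0 < (1 - v) ^ α := Real.rpow_pos_of_pos (by linarith [hv.2]) α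
      have h3 : 0 ≤ ψ v * v ^ α := mul_nonneg (hψ_nonneg _) (Real.rpow_nonneg hv.1.le α)
      nlinarith
  have hb_le : ∀ v ∈ Ioo (0:ℝ) 1, b v ≤ 6 * (min v (1 - v)) ^ α := by
    intro v hv
    have hmin0 : 0 < min v (1 - v) := lt_min hv.1 (by linarith [hv.2])
    have hminnn : 0 ≤ (min v (1 - v)) ^ α := Real.rpow_nonneg hmin0.le α
    simp only [hb_def]
    rcases le_or_gt v (1/3) with h | h
    · have h0 : ψ (1 - v) = 0 := hψ_zero (1 - v) (by linarith)
      have hminv : min v (1 - v) = v := min_eq_left (by linarith)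
      rw [h0, zero_mul, add_zero, hminv]
      have h1 : ψ v * v ^ α ≤ 1 * v ^ α :=
        mul_le_mul_of_nonneg_right (hψ_le v) (Real.rpow_nonneg hv.1.le α)
      have h2 : 0 ≤ v ^ α := Real.rpow_nonneg hv.1.le α
      nlinarith
    rcases le_or_gt (2/3) v with h2 | h2
    · have h0 : ψ v = 0 := hψ_zero v h2
      have hminv : min v (1 - v) = 1 - v := min_eq_right (by linarith)
      rw [h0, zero_mul, zero_add, hminv]
      have h1 : ψ (1 - v) * (1 - v) ^ α ≤ 1 * (1 - v) ^ α :=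
        mul_le_mul_of_nonneg_right (hψ_le _) (Real.rpow_nonneg (by linarith [hv.2]) α)
      have h3 : 0 ≤ (1 - v) ^ α := Real.rpow_nonneg (by linarith [hv.2]) α
      nlinarith
    · have hv1 : v ^ α ≤ 1 := Real.rpow_le_one hv.1.le (by linarith [hv.2]) hα0.le
      have hv2 : (1 - v) ^ α ≤ 1 := Real.rpow_le_one (by linarith [hv.2]) (by linarith [hv.1]) hα0.le
      have hb2 : ψ v * v ^ α + ψ (1 - v) * (1 - v) ^ α ≤ 2 := by
        have k1 := hψ_le v; have k2 := hψ_nonneg v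
        have k3 := hψ_le (1 - v); have k4 := hψ_nonneg (1 - v)
        have k5 := Real.rpow_nonneg hv.1.le α
        have k6 := Real.rpow_nonneg (show (0:ℝ) ≤ 1 - v by linarith [hv.2]) α
        nlinarith
      have hmin13 : 1/3 ≤ min v (1 - v) := le_min (by linarith) (by linarith)
      have hmin1 : min v (1 - v) ≤ 1 := le_trans (min_le_left _ _) (by linarith [hv.2])
      have h3 : min v (1 - v) ≤ (min v (1 - v)) ^ α := rpow_self_le hα1 hmin0.le hmin1
      nlinarith
  have hb_eq : ∀ v : ℝ, 0 < v → v ≤ 1/3 → b v = v ^ α := by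
    intro v h0 h1
    simp only [hb_def]
    rw [hψ_one v h1, hψ_zero (1 - v) (by linarith), one_mul, zero_mul, add_zero]
  set ε : ℝ := C₁ / 6 with hε_def
  have hε0 : 0 < ε := by rw [hε_def]; linarith
  have hεb_le : ∀ v ∈ Ioo (0:ℝ) 1, ε * b v ≤ I v := by
    intro v hv
    have h1 := hb_le v hv
    have h2 := hIlow v ⟨hv.1.le, hv.2.le⟩
    have h3 : ε * b v ≤ ε * (6 * (min v (1 - v)) ^ α) :=
      mul_le_mul_of_nonneg_left h1 hε0.le
    have h4 : ε * (6 * (min v (1 - v)) ^ α) = C₁ * (min v (1 - v)) ^ α := by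
      rw [hε_def]; ring
    linarith
  -- the pieces of Istar
  set w : ℝ → ℝ := fun v => |v - vm| ^ (1 + β) with hw_def
  set wb : ℝ → ℝ := fun v => |1 - v - vm| ^ (1 + β) with hwb_def
  set L : ℝ → ℝ := fun v => I vm + d * (v - vm) with hL_def
  set Lb : ℝ → ℝ := fun v => I vm + d * (1 - v - vm) with hLb_def
  set T : ℝ → ℝ := fun v => L v - C₀ * w v with hT_def
  set Tb : ℝ → ℝ := fun v => Lb v - C₀ * wb v with hTb_def
  set u₁ : ℝ → ℝ := fun v => χ v * (1 - χ (1 - v) / 2) with hu₁_def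
  set u₂ : ℝ → ℝ := fun v => χ (1 - v) * (1 - χ v / 2) with hu₂_def
  set S : ℝ → ℝ :=
    fun v => (1 - χ v) * (1 - χ (1 - v)) * (ε * b v) + u₁ v * L v + u₂ v * Lb v with hS_def
  set J : ℝ → ℝ := fun v => S v - C₀ * (u₁ v * w v) - C₀ * (u₂ v * wb v) with hJ_def
  have hJ_pt : ∀ v : ℝ,
      J v = (1 - χ v) * (1 - χ (1 - v)) * (ε * b v) + u₁ v * T v + u₂ v * Tb v := by
    intro v
    simp only [hJ_def, hS_def, hT_def, hTb_def]
    ring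
  -- facts about T and Tb
  have hT_le : ∀ v : ℝ, |v - vm| < r → T v ≤ I v := by
    intro v hv
    have ht := hTaylor v (hv.trans hrρ)
    rw [abs_le] at ht
    simp only [hT_def, hL_def, hw_def]
    linarith [ht.1]
  have hwle : ∀ v : ℝ, |v - vm| ≤ r → w v ≤ r := by
    intro v hv
    have h1 : |v - vm| ^ (1 + β) ≤ r ^ (1 + β) :=
      Real.rpow_le_rpow (abs_nonneg _) hv (by linarith)
    have h2 : r ^ (1 + β) ≤ r ^ (1:ℝ) :=
      Real.rpow_le_rpow_of_exponent_ge hr hr1 (by linarith)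
    rw [Real.rpow_one] at h2
    simp only [hw_def]
    linarith
  have hT_ge : ∀ v : ℝ, |v - vm| ≤ r → I vm / 2 ≤ T v := by
    intro v hv
    have h1 : |d * (v - vm)| ≤ |d| * r := by
      rw [abs_mul]; exact mul_le_mul_of_nonneg_left hv (abs_nonneg d)
    have h3 : C₀ * w v ≤ C₀ * r := mul_le_mul_of_nonneg_left (hwle v hv) hC₀.le
    have h4 := (abs_le.1 h1).1
    have h5 : (|d| + C₀) * r = |d| * r + C₀ * r := by ring
    simp only [hT_def, hL_def]
    linarith [hrD]
  have hTb_eq : ∀ v : ℝ, Tb v = T (1 - v) := by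
    intro v
    simp only [hT_def, hTb_def, hL_def, hLb_def, hw_def, hwb_def]
  have hTb_le : ∀ v ∈ Ioo (0:ℝ) 1, |1 - v - vm| < r → Tb v ≤ I v := by
    intro v hv h
    have h2 : T (1 - v) ≤ I (1 - v) := hT_le (1 - v) h
    have h3 : I v = I (1 - v) := hIsymm v ⟨hv.1.le, hv.2.le⟩
    rw [hTb_eq v, h3]
    exact h2
  have hTb_ge : ∀ v : ℝ, |1 - v - vm| ≤ r → I vm / 2 ≤ Tb v := by
    intro v hv
    rw [hTb_eq v]
    exact hT_ge (1 - v) hv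
  -- facts about the coefficients
  have hu₁_nonneg : ∀ v : ℝ, 0 ≤ u₁ v := by
    intro v
    simp only [hu₁_def]
    have := hχle (1 - v); have := hχnn (1 - v)
    exact mul_nonneg (hχnn v) (by linarith)
  have hu₂_nonneg : ∀ v : ℝ, 0 ≤ u₂ v := by
    intro v
    simp only [hu₂_def]
    have := hχle v; have := hχnn v
    exact mul_nonneg (hχnn (1 - v)) (by linarith)
  have hu₁_zero : ∀ v : ℝ, χ v = 0 → u₁ v = 0 := by
    intro v h; simp only [hu₁_def, h, zero_mul]
  have hu₂_zero : ∀ v : ℝ, χ (1 - v) = 0 → u₂ v = 0 := by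
    intro v h; simp only [hu₂_def, h, zero_mul]
  -- minorant property
  have hmain_le : ∀ v ∈ Ioo (0:ℝ) 1, J v ≤ I v := by
    intro v hv
    have h0 : 0 ≤ (1 - χ v) * (1 - χ (1 - v)) :=
      mul_nonneg (by linarith [hχle v]) (by linarith [hχle (1 - v)])
    have h1 : (1 - χ v) * (1 - χ (1 - v)) * (ε * b v) ≤ (1 - χ v) * (1 - χ (1 - v)) * I v :=
      mul_le_mul_of_nonneg_left (hεb_le v hv) h0
    have h2 : u₁ v * T v ≤ u₁ v * I v := by
      rcases eq_or_ne (χ v) 0 with h | h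
      · rw [hu₁_zero v h]; simp
      · exact mul_le_mul_of_nonneg_left (hT_le v (hχsupp v h)) (hu₁_nonneg v)
    have h3 : u₂ v * Tb v ≤ u₂ v * I v := by
      rcases eq_or_ne (χ (1 - v)) 0 with h | h
      · rw [hu₂_zero v h]; simp
      · exact mul_le_mul_of_nonneg_left (hTb_le v hv (hχsupp (1 - v) h)) (hu₂_nonneg v)
    have hsum : (1 - χ v) * (1 - χ (1 - v)) * I v + u₁ v * I v + u₂ v * I v = I v := by
      simp only [hu₁_def, hu₂_def]; ring
    rw [hJ_pt v]
    linarith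
  -- positivity
  have hmain_pos : ∀ v ∈ Ioo (0:ℝ) 1, 0 < J v := by
    intro v hv
    set P : ℝ := min (ε * b v) (I vm / 2) with hP_def
    have hP : 0 < P := lt_min (mul_pos hε0 (hb_pos v hv)) (by linarith)
    have h0 : 0 ≤ (1 - χ v) * (1 - χ (1 - v)) :=
      mul_nonneg (by linarith [hχle v]) (by linarith [hχle (1 - v)])
    have h1 : (1 - χ v) * (1 - χ (1 - v)) * P ≤ (1 - χ v) * (1 - χ (1 - v)) * (ε * b v) :=
      mul_le_mul_of_nonneg_left (min_le_left _ _) h0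
    have h2 : u₁ v * P ≤ u₁ v * T v := by
      rcases eq_or_ne (χ v) 0 with h | h
      · rw [hu₁_zero v h]; simp
      · exact mul_le_mul_of_nonneg_left
          ((min_le_right _ _).trans (hT_ge v (hχsupp v h).le)) (hu₁_nonneg v)
    have h3 : u₂ v * P ≤ u₂ v * Tb v := by
      rcases eq_or_ne (χ (1 - v)) 0 with h | h
      · rw [hu₂_zero v h]; simp
      · exact mul_le_mul_of_nonneg_left
          ((min_le_right _ _).trans (hTb_ge v (hχsupp (1 - v) h).le)) (hu₂_nonneg v)
    have hsum : (1 - χ v) * (1 - χ (1 - v)) * P + u₁ v * P + u₂ v * P = P := by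
      simp only [hu₁_def, hu₂_def]; ring
    rw [hJ_pt v]
    linarith
  -- symmetry
  have hmain_symm : ∀ v ∈ Ioo (0:ℝ) 1, J v = J (1 - v) := by
    intro v _
    have e1 : (1:ℝ) - (1 - v) = v := by ring
    rw [hJ_pt v, hJ_pt (1 - v)]
    simp only [hu₁_def, hu₂_def, hT_def, hTb_def, hL_def, hLb_def, hw_def, hwb_def]
    rw [e1, hb_symm v]
    ring
  -- d vanishes in the symmetric case
  have hd0 : vm = 1/2 → d = 0 := by
    intro h
    have hmem : Ioo (0:ℝ) 1 ∈ nhds vm := Ioo_mem_nhds hvm0 hvm1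
    have hev : (fun v => I (1 - v)) =ᶠ[nhds vm] I := by
      filter_upwards [hmem] with v hv
      exact (hIsymm v ⟨hv.1.le, hv.2.le⟩).symm
    have hf : HasDerivAt (fun v : ℝ => 1 - v) (-1) vm := by
      simpa [Pi.sub_def] using (hasDerivAt_const vm (1:ℝ)).sub (hasDerivAt_id vm)
    have hId' : HasDerivAt I d (1 - vm) := by
      rw [show (1:ℝ) - vm = vm by rw [h]; norm_num]
      exact hId
    have hcomp := HasDerivAt.comp (h := fun v : ℝ => 1 - v) vm hId' hf
    have h3 : HasDerivAt I (d * -1) vm := hcomp.congr_of_eventuallyEq hev.symm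
    have h4 := hId.unique h3
    linarith
  -- local identification with T near vm
  have hloc : ∀ v : ℝ, |v - vm| < r/2 → J v = T v := by
    intro v hv
    have hχv : χ v = 1 := hχ1 v hv.le
    rw [hJ_pt v]
    by_cases hhalf : vm = 1/2
    · have hχv2 : χ (1 - v) = 1 := by
        apply hχ1
        rw [show (1:ℝ) - v - vm = -(v - vm) by rw [hhalf]; ring, abs_neg]
        exact hv.le
      have hTT : Tb v = T v := by
        have hd' := hd0 hhalf
        simp only [hT_def, hTb_def, hL_def, hLb_def, hw_def, hwb_def, hd']
        rw [show (1:ℝ) - v - vm = -(v - vm) by rw [hhalf]; ring, abs_neg]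
        ring
      simp only [hu₁_def, hu₂_def]
      rw [hχv, hχv2, hTT]
      ring
    · have hχv2 : χ (1 - v) = 0 := by
        apply hχ0
        have h1 : |1 - 2*vm| ≤ |1 - v - vm| + |v - vm| := by
          have h := abs_add_le (1 - v - vm) (v - vm)
          rw [show (1 - v - vm) + (v - vm) = 1 - 2*vm by ring] at h
          exact h
        have h2 : |1 - 2*vm| = 2 * |vm - 1/2| := by
          rw [show (1 - 2*vm : ℝ) = -(2*(vm - 1/2)) by ring, abs_neg, abs_mul]
          norm_num
        have h3 := hrhalf hhalf
        linarith [hv.le]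
      simp only [hu₁_def, hu₂_def]
      rw [hχv, hχv2]
      ring
  have hTd : HasDerivAt T d vm := by
    have hw' : HasDerivAt w ((1 + β) * F β (vm - vm) * 1) vm := by
      have hf' : HasDerivAt (fun v : ℝ => v - vm) 1 vm := (hasDerivAt_id vm).sub_const vm
      have h := HasDerivAt.comp (h := fun v : ℝ => v - vm) vm (hasDerivAt_abs_rpow hβ0 (vm - vm)) hf'
      rw [hw_def]
      simpa [Function.comp_def] using h
    rw [show (1 + β) * F β (vm - vm) * 1 = 0 by rw [sub_self, F_zero]; ring] at hw'
    have hL' : HasDerivAt L d vm := by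
      rw [hL_def]
      simpa using (((hasDerivAt_id vm).sub_const vm).const_mul d).const_add (I vm)
    have h := hL'.sub (hw'.const_mul C₀)
    rw [hT_def]
    simpa [Pi.sub_def] using h
  have hJvm_eq : J vm = I vm := by
    rw [hloc vm (by rw [sub_self, abs_zero]; exact half_pos hr)]
    simp only [hT_def, hL_def, hw_def]
    rw [sub_self, abs_zero, Real.zero_rpow (by positivity : (1:ℝ) + β ≠ 0)]
    ring
  have hJd : HasDerivAt J d vm := by
    have hev : J =ᶠ[nhds vm] T := by
      filter_upwards [Metric.ball_mem_nhds vm (half_pos hr)] with v hv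
      exact hloc v (by simpa [Real.dist_eq] using hv)
    exact hTd.congr_of_eventuallyEq hev
  -- smoothness machinery
  have hψ_cd : ContDiff ℝ 2 ψ := by
    rw [hψ_def]
    exact Real.smoothTransition.contDiff.comp
      (contDiff_const.sub (contDiff_const.mul contDiff_id))
  have hχ2_cd : ContDiff ℝ 2 (fun v : ℝ => χ (1 - v)) :=
    hχcd.comp (contDiff_const.sub contDiff_id)
  have hrpow1 : ContDiffOn ℝ 2 (fun v : ℝ => v ^ α) (Ioo 0 1) := fun v hv =>
    (Real.contDiffAt_rpow_const_of_ne (ne_of_gt hv.1)).contDiffWithinAt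
  have hrpow2 : ContDiffOn ℝ 2 (fun v : ℝ => (1 - v) ^ α) (Ioo 0 1) := by
    intro v hv
    have h1 : (1:ℝ) - v ≠ 0 := ne_of_gt (by linarith [hv.2])
    exact ((Real.contDiffAt_rpow_const_of_ne (p := α) h1).comp v
      ((contDiff_const.sub contDiff_id).contDiffAt)).contDiffWithinAt
  have hb_cd : ContDiffOn ℝ 2 b (Ioo 0 1) := by
    rw [hb_def]
    exact ((hψ_cd.contDiffOn).mul hrpow1).add
      (((hψ_cd.comp (contDiff_const.sub contDiff_id)).contDiffOn).mul hrpow2)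
  have hL_cd : ContDiff ℝ 2 L := by
    rw [hL_def]
    exact contDiff_const.add (contDiff_const.mul (contDiff_id.sub contDiff_const))
  have hLb_cd : ContDiff ℝ 2 Lb := by
    rw [hLb_def]
    exact contDiff_const.add
      (contDiff_const.mul ((contDiff_const.sub contDiff_id).sub contDiff_const))
  have hu₁_cd : ContDiff ℝ 2 u₁ := by
    rw [hu₁_def]
    exact hχcd.mul (contDiff_const.sub (hχ2_cd.div_const 2))
  have hu₂_cd : ContDiff ℝ 2 u₂ := by
    rw [hu₂_def]
    exact hχ2_cd.mul (contDiff_const.sub (hχcd.div_const 2))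
  have hS_cd : ContDiffOn ℝ 2 S (Ioo 0 1) := by
    rw [hS_def]
    refine ContDiffOn.add (ContDiffOn.add ?_ ?_) ?_
    · exact (((contDiff_const.sub hχcd).mul (contDiff_const.sub hχ2_cd)).contDiffOn).mul
        (contDiffOn_const.mul hb_cd)
    · exact (hu₁_cd.mul hL_cd).contDiffOn
    · exact (hu₂_cd.mul hLb_cd).contDiffOn
  have hw_gp : GoodPair β w (fun v => (1 + β) * F β (v - vm) * 1) := by
    refine ⟨?_, ?_, ?_⟩
    · intro x _
      have hf' : HasDerivAt (fun v : ℝ => v - vm) 1 x := (hasDerivAt_id x).sub_const vm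
      have h := HasDerivAt.comp (h := fun v : ℝ => v - vm) x (hasDerivAt_abs_rpow hβ0 (x - vm)) hf'
      rw [hw_def]
      simpa [Function.comp_def] using h
    · exact ((continuous_const.mul ((F_continuous hβ0 hβ1).comp
        (continuous_id.sub continuous_const))).mul continuous_const).continuousOn
    · intro K _ _
      refine ⟨(1 + β) * 2, fun x _ y _ => ?_⟩
      have h := F_holder hβ0 hβ1 (x - vm) (y - vm)
      rw [show x - vm - (y - vm) = x - y by ring] at h
      calc |(1 + β) * F β (x - vm) * 1 - (1 + β) * F β (y - vm) * 1|
          = (1 + β) * |F β (x - vm) - F β (y - vm)| := by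
            rw [mul_one, mul_one, ← mul_sub, abs_mul,
              abs_of_nonneg (by linarith : (0:ℝ) ≤ 1 + β)]
        _ ≤ (1 + β) * (2 * |x - y| ^ β) := mul_le_mul_of_nonneg_left h (by linarith)
        _ = (1 + β) * 2 * |x - y| ^ β := by ring
  have hwb_gp : GoodPair β wb (fun v => (1 + β) * F β (1 - v - vm) * (-1)) := by
    refine ⟨?_, ?_, ?_⟩
    · intro x _
      have hinner : HasDerivAt (fun v : ℝ => 1 - v - vm) (-1) x := by
        simpa using ((hasDerivAt_const x (1:ℝ)).sub (hasDerivAt_id x)).sub_const vm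
      have h := HasDerivAt.comp (h := fun v : ℝ => 1 - v - vm) x
        (hasDerivAt_abs_rpow hβ0 (1 - x - vm)) hinner
      rw [hwb_def]
      simpa [Function.comp_def] using h
    · exact ((continuous_const.mul ((F_continuous hβ0 hβ1).comp
        ((continuous_const.sub continuous_id).sub continuous_const))).mul
        continuous_const).continuousOn
    · intro K _ _
      refine ⟨(1 + β) * 2, fun x _ y _ => ?_⟩
      have h := F_holder hβ0 hβ1 (1 - x - vm) (1 - y - vm)
      rw [show 1 - x - vm - (1 - y - vm) = -(x - y) by ring, abs_neg] at h
      calc |(1 + β) * F β (1 - x - vm) * (-1) - (1 + β) * F β (1 - y - vm) * (-1)|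
          = (1 + β) * |F β (1 - x - vm) - F β (1 - y - vm)| := by
            rw [show (1 + β) * F β (1 - x - vm) * (-1) - (1 + β) * F β (1 - y - vm) * (-1)
              = -((1 + β) * (F β (1 - x - vm) - F β (1 - y - vm))) by ring, abs_neg, abs_mul,
              abs_of_nonneg (by linarith : (0:ℝ) ≤ 1 + β)]
        _ ≤ (1 + β) * (2 * |x - y| ^ β) := mul_le_mul_of_nonneg_left h (by linarith)
        _ = (1 + β) * 2 * |x - y| ^ β := by ring
  have hJ_gp : GoodPair β J (fun v =>
      deriv S v - C₀ * (deriv u₁ v * w v + u₁ v * ((1 + β) * F β (v - vm) * 1))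
        - C₀ * (deriv u₂ v * wb v + u₂ v * ((1 + β) * F β (1 - v - vm) * (-1)))) := by
    rw [hJ_def]
    exact GoodPair.sub (GoodPair.sub (GoodPair.of_contDiffOn hβ1 hS_cd)
      (GoodPair.const_mul C₀ (GoodPair.mul hβ1
        (GoodPair.of_contDiffOn hβ1 hu₁_cd.contDiffOn) hw_gp)))
      (GoodPair.const_mul C₀ (GoodPair.mul hβ1
        (GoodPair.of_contDiffOn hβ1 hu₂_cd.contDiffOn) hwb_gp))
  -- power law near zero
  set δ : ℝ := min (1/3) (min (vm - r) (1 - vm - r)) with hδ_def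
  have hδa : δ ≤ 1/3 := min_le_left _ _
  have hδb : δ ≤ vm - r := le_trans (min_le_right _ _) (min_le_left _ _)
  have hδc : δ ≤ 1 - vm - r := le_trans (min_le_right _ _) (min_le_right _ _)
  have hδ0 : 0 < δ := lt_min (by norm_num) (lt_min (by linarith) (by linarith))
  have hδ1 : δ < 1 := lt_of_le_of_lt hδa (by norm_num)
  refine ⟨J, hJ_gp.contDiffOn, ?_, hmain_symm, fun v hv => ⟨hmain_pos v hv, hmain_le v hv⟩,
    hJvm_eq, hJd, ε, hε0, δ, ⟨hδ0, hδ1⟩, ?_⟩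
  · intro K hK hKc
    obtain ⟨C, hC⟩ := hJ_gp.2.2 K hK hKc
    refine ⟨C, fun x hx y hy => ?_⟩
    rw [(hJ_gp.1 x (hK hx)).deriv, (hJ_gp.1 y (hK hy)).deriv]
    exact hC x hx y hy
  · intro v hv
    obtain ⟨hv0, hvδ⟩ := hv
    have hχv : χ v = 0 := by
      apply hχ0
      rw [abs_sub_comm, abs_of_nonneg (by linarith : (0:ℝ) ≤ vm - v)]
      linarith
    have hχv2 : χ (1 - v) = 0 := by
      apply hχ0
      rw [abs_of_nonneg (by linarith : (0:ℝ) ≤ 1 - v - vm)]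
      linarith
    have hbv : b v = v ^ α := hb_eq v hv0 (by linarith)
    rw [hJ_pt v]
    simp only [hu₁_def, hu₂_def]
    rw [hχv, hχv2, hbv]
    ring
end

section
/- The rearrangement is an L^1 contraction: if u_1, u_2 are in L^1(Omega), then the integral over Omega* of |u_1* - u_2*| dy is at most the integral over Omega of |u_1 - u_2| dx. -/
open MeasureTheory Set Filter Topology
open scoped ENNReal Classical

noncomputable section

/-- Abbreviation for `n`-dimensional Euclidean space. -/
abbrev Eucl (n : ℕ) := EuclideanSpace ℝ (Fin n)

/-- The hypotheses on the modified isoperimetric function `I*` and on the solution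
`V` of the Cauchy problem `V' = I*(V)`, `V(0) = 1/2`, together with the data
`T`, the radius function `r` and the rearranged domain `Ω*`. -/
structure RearrangedSetup (n : ℕ) (C₀ δ₀ : ℝ) (Istar V : ℝ → ℝ) (T : ℝ)
    (r : ℝ → ℝ) (Ωs : Set (Eucl (n - 1) × ℝ)) : Prop where
  C₀_pos : 0 < C₀
  δ₀_mem : δ₀ ∈ Set.Ioo (0 : ℝ) 1
  nonneg : ∀ v, 0 ≤ Istar v
  bdd : ∃ M : ℝ, ∀ v, Istar v ≤ M
  zero_outside : ∀ v : ℝ, v ∉ Set.Ioo (0 : ℝ) 1 → Istar v = 0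
  cont : ContinuousOn Istar (Set.Ioo 0 1)
  pos : ∀ v ∈ Set.Ioo (0 : ℝ) 1, 0 < Istar v
  locLip : ∀ K : Set ℝ, K ⊆ Set.Ioo (0 : ℝ) 1 → IsCompact K →
    ∃ L : NNReal, LipschitzOnWith L Istar K
  symm : ∀ v ∈ Set.Ioo (0 : ℝ) 1, Istar v = Istar (1 - v)
  tail : ∀ v ∈ Set.Ioo (0 : ℝ) δ₀, Istar v = C₀ * v ^ (((n : ℝ) - 1) / n)
  ode : ∀ t, HasDerivAt V (Istar (V t)) t
  init : V 0 = 1 / 2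
  range : ∀ t, V t ∈ Set.Icc (0 : ℝ) 1
  T_pos : 0 < T
  V_bot : V (-T) = 0
  V_top : V T = 1
  V_open : ∀ t ∈ Set.Ioo (-T) T, V t ∈ Set.Ioo (0 : ℝ) 1
  r_def : ∀ t : ℝ, r t = (Istar (V t) /
      (MeasureTheory.volume (Metric.ball (0 : Eucl (n - 1)) 1)).toReal) ^
        ((1 : ℝ) / ((n : ℝ) - 1))
  Ωs_def : Ωs = {y : Eucl (n - 1) × ℝ | y.2 ∈ Set.Ioo (-T) T ∧ ‖y.1‖ < r y.2}

/-- A bounded open set `Ω ⊆ ℝⁿ` has Lipschitz boundary: near every boundary point,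
`Ω` is the subgraph of a Lipschitz function over a hyperplane. -/
def HasLipschitzBoundary {n : ℕ} (Ω : Set (Eucl n)) : Prop :=
  ∀ x ∈ frontier Ω, ∃ ν : Eucl n, ‖ν‖ = 1 ∧
    ∃ (f : (Submodule.span ℝ {ν})ᗮ → ℝ) (L : NNReal), LipschitzWith L f ∧
      ∃ ρ > 0, ∀ y ∈ Metric.ball x ρ,
        (y ∈ Ω ↔ (inner ℝ y ν : ℝ) < f (Submodule.orthogonalProjection (Submodule.span ℝ {ν})ᗮ y))

/-- The hypotheses on the domain `Ω`: open, bounded, connected, of measure one,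
with Lipschitz boundary. -/
structure DomainSetup (n : ℕ) (Ω : Set (Eucl n)) : Prop where
  isOpen : IsOpen Ω
  bounded : Bornology.IsBounded Ω
  connected : IsConnected Ω
  vol_one : MeasureTheory.volume Ω = 1
  lipschitz : HasLipschitzBoundary Ω

/-- The distribution function `ρ_u(s) = Lⁿ({x ∈ Ω : u(x) > s})`. -/
def distrib {n : ℕ} (Ω : Set (Eucl n)) (u : Eucl n → ℝ) (s : ℝ) : ℝ :=
  (MeasureTheory.volume (Ω ∩ {x | s < u x})).toReal

/-- The one-dimensional profile `g_u(t) = sup{s : ρ_u(s) > V(t)}` of the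
rearrangement. -/
def profile {n : ℕ} (Ω : Set (Eucl n)) (V : ℝ → ℝ) (u : Eucl n → ℝ) (t : ℝ) : ℝ :=
  sSup {s : ℝ | V t < distrib Ω u s}

/-- The rearrangement `u*(y', yₙ) = g_u(yₙ)` on the rearranged domain. -/
def rearr {n : ℕ} (Ω : Set (Eucl n)) (V : ℝ → ℝ) (u : Eucl n → ℝ)
    (y : Eucl (n - 1) × ℝ) : ℝ :=
  profile Ω V u y.2

end


section AuxLemmas

open MeasureTheory Set

variable {n : ℕ} {Ω : Set (Eucl n)}

lemma meas_distrib_ne_top (hΩ : volume Ω = 1) (u : Eucl n → ℝ) (s : ℝ) :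
    volume (Ω ∩ {x | s < u x}) ≠ ∞ := by
  have h : volume (Ω ∩ {x | s < u x}) ≤ 1 :=
    le_trans (measure_mono inter_subset_left) hΩ.le
  exact (h.trans_lt ENNReal.one_lt_top).ne

lemma distrib_nonneg' (u : Eucl n → ℝ) (s : ℝ) : 0 ≤ distrib Ω u s :=
  ENNReal.toReal_nonneg

lemma ofReal_distrib (hΩ : volume Ω = 1) (u : Eucl n → ℝ) (s : ℝ) :
    ENNReal.ofReal (distrib Ω u s) = volume (Ω ∩ {x | s < u x}) :=
  ENNReal.ofReal_toReal (meas_distrib_ne_top hΩ u s)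

lemma distrib_le_one (hΩ : volume Ω = 1) (u : Eucl n → ℝ) (s : ℝ) :
    distrib Ω u s ≤ 1 := by
  have h : volume (Ω ∩ {x | s < u x}) ≤ 1 :=
    le_trans (measure_mono inter_subset_left) hΩ.le
  have := ENNReal.toReal_mono ENNReal.one_ne_top h
  simpa [distrib] using this

lemma distrib_antitone (hΩ : volume Ω = 1) (u : Eucl n → ℝ) :
    Antitone (distrib Ω u) := by
  intro s s' hss
  exact ENNReal.toReal_mono (meas_distrib_ne_top hΩ u s)
    (measure_mono (inter_subset_inter_right _ fun x hx => lt_of_le_of_lt hss hx))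

lemma distrib_right_cont (hΩ : volume Ω = 1) (u : Eucl n → ℝ) {v s : ℝ} (hv : 0 ≤ v)
    (h : v < distrib Ω u s) : ∃ s' > s, v < distrib Ω u s' := by
  set E : ℕ → Set (Eucl n) := fun k => Ω ∩ {x | s + 1 / (k + 1) < u x} with hE
  have hmono : Monotone E := by
    intro k k' hk
    apply inter_subset_inter_right
    intro x hx
    simp only [mem_setOf_eq] at hx ⊢
    have h1 : 1 / ((k' : ℝ) + 1) ≤ 1 / ((k : ℝ) + 1) := by
      apply one_div_le_one_div_of_le
      · positivity
      · have : (k : ℝ) ≤ (k' : ℝ) := Nat.cast_le.2 hk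
        linarith
    linarith
  have hUnion : ⋃ k, E k = Ω ∩ {x | s < u x} := by
    ext x
    simp only [hE, mem_iUnion, mem_inter_iff, mem_setOf_eq]
    constructor
    · rintro ⟨k, hxΩ, hk⟩
      have hpos : (0:ℝ) < 1 / ((k:ℝ) + 1) := by positivity
      exact ⟨hxΩ, by linarith⟩
    · rintro ⟨hxΩ, hx⟩
      obtain ⟨k, hk⟩ := exists_nat_one_div_lt (sub_pos.2 hx)
      exact ⟨k, hxΩ, by linarith⟩
  have hsup := hmono.measure_iUnion (μ := volume)
  rw [hUnion] at hsup
  have hlt : ENNReal.ofReal v < volume (Ω ∩ {x | s < u x}) := by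
    rw [← ofReal_distrib hΩ]
    exact (ENNReal.ofReal_lt_ofReal_iff_of_nonneg hv).2 h
  rw [hsup] at hlt
  obtain ⟨k, hk⟩ := lt_iSup_iff.1 hlt
  refine ⟨s + 1 / ((k:ℝ) + 1), lt_add_of_pos_right s (by positivity), ?_⟩
  rw [← ofReal_distrib hΩ] at hk
  exact (ENNReal.ofReal_lt_ofReal_iff_of_nonneg hv).1 hk

lemma distrib_bddAbove (hΩ : volume Ω = 1) (hΩm : MeasurableSet Ω) {u : Eucl n → ℝ}
    (hu : Measurable u) {v : ℝ} (hv : 0 < v) :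
    BddAbove {s : ℝ | v < distrib Ω u s} := by
  set F : ℕ → Set (Eucl n) := fun k => Ω ∩ {x | (k : ℝ) < u x} with hF
  have hmeas : ∀ k, NullMeasurableSet (F k) volume := fun k =>
    (hΩm.inter (measurableSet_lt measurable_const hu)).nullMeasurableSet
  have hanti : Antitone F := by
    intro k k' hk
    apply inter_subset_inter_right
    intro x hx
    simp only [mem_setOf_eq] at hx ⊢
    exact lt_of_le_of_lt (Nat.cast_le.2 hk) hx
  have hempty : ⋂ k, F k = ∅ := by
    ext x
    simp only [hF, mem_iInter, mem_inter_iff, mem_setOf_eq, mem_empty_iff_false, iff_false,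
      not_forall]
    obtain ⟨k, hk⟩ := exists_nat_gt (u x)
    exact ⟨k, fun hc => absurd hc.2 (not_lt.2 hk.le)⟩
  have htend := tendsto_measure_iInter_atTop hmeas hanti
    ⟨0, by simpa [hF] using meas_distrib_ne_top hΩ u ((0:ℕ):ℝ)⟩
  rw [hempty, measure_empty] at htend
  have hev := htend.eventually_lt_const
    (show (0:ℝ≥0∞) < ENNReal.ofReal v from ENNReal.ofReal_pos.2 hv)
  obtain ⟨k, hk⟩ := hev.exists
  refine ⟨(k : ℝ), fun s hs => ?_⟩
  by_contra hc
  push_neg at hc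
  have h1 : distrib Ω u s ≤ distrib Ω u (k:ℝ) := distrib_antitone hΩ u hc.le
  have h2 : distrib Ω u (k:ℝ) < v := ENNReal.toReal_lt_of_lt_ofReal hk
  rw [mem_setOf_eq] at hs
  linarith

lemma distrib_exists_lt (hΩ : volume Ω = 1) (u : Eucl n → ℝ) {v : ℝ}
    (hv0 : 0 ≤ v) (hv1 : v < 1) :
    {s : ℝ | v < distrib Ω u s}.Nonempty := by
  set G : ℕ → Set (Eucl n) := fun k => Ω ∩ {x | -(k : ℝ) < u x} with hG
  have hmono : Monotone G := by
    intro k k' hk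
    apply inter_subset_inter_right
    intro x hx
    simp only [mem_setOf_eq] at hx ⊢
    exact lt_of_le_of_lt (neg_le_neg (Nat.cast_le.2 hk)) hx
  have hUnion : ⋃ k, G k = Ω := by
    ext x
    simp only [hG, mem_iUnion, mem_inter_iff, mem_setOf_eq]
    constructor
    · rintro ⟨k, hk, _⟩; exact hk
    · intro hx
      obtain ⟨k, hk⟩ := exists_nat_gt (-u x)
      exact ⟨k, hx, by linarith⟩
  have hsum := hmono.measure_iUnion (μ := volume)
  rw [hUnion, hΩ] at hsum
  have hlt : ENNReal.ofReal v < 1 := by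
    rw [← ENNReal.ofReal_one]
    exact (ENNReal.ofReal_lt_ofReal_iff_of_nonneg hv0).2 hv1
  rw [hsum] at hlt
  obtain ⟨k, hk⟩ := lt_iSup_iff.1 hlt
  refine ⟨-(k:ℝ), ?_⟩
  rw [mem_setOf_eq]
  rw [← ofReal_distrib hΩ] at hk
  exact (ENNReal.ofReal_lt_ofReal_iff_of_nonneg hv0).1 hk

lemma setOf_lt_distrib_eq_Iio (hΩ : volume Ω = 1) (hΩm : MeasurableSet Ω) {u : Eucl n → ℝ}
    (hu : Measurable u) {v : ℝ} (hv : v ∈ Ioo (0:ℝ) 1) :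
    {s : ℝ | v < distrib Ω u s} = Iio (sSup {s : ℝ | v < distrib Ω u s}) := by
  have hba := distrib_bddAbove hΩ hΩm hu hv.1
  have hne := distrib_exists_lt hΩ u hv.1.le hv.2
  ext s
  simp only [mem_setOf_eq, mem_Iio]
  constructor
  · intro hs
    obtain ⟨s', hs', hv'⟩ := distrib_right_cont hΩ u hv.1.le hs
    exact lt_of_lt_of_le hs' (le_csSup hba hv')
  · intro hs
    obtain ⟨s', hs'mem, hlt⟩ := exists_lt_of_lt_csSup hne hs
    exact lt_of_lt_of_le hs'mem (distrib_antitone hΩ u hlt.le)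

lemma measurableSet_xor {α : Type*} [MeasurableSpace α] {P Q : α → Prop}
    (hP : MeasurableSet {x | P x}) (hQ : MeasurableSet {x | Q x}) :
    MeasurableSet {x | Xor' (P x) (Q x)} := by
  have h : {x | Xor' (P x) (Q x)} = ({x | P x} \ {x | Q x}) ∪ ({x | Q x} \ {x | P x}) := by
    ext x
    simp only [mem_setOf_eq, Xor', Xor, mem_union, mem_diff]
  rw [h]
  exact (hP.diff hQ).union (hQ.diff hP)

lemma xor_volume (a b : ℝ) :
    volume {s : ℝ | Xor' (s < a) (s < b)} = ENNReal.ofReal |a - b| := by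
  rcases le_total a b with h | h
  · have hset : {s : ℝ | Xor' (s < a) (s < b)} = Ico a b := by
      ext s
      simp only [mem_setOf_eq, Xor', Xor, mem_Ico, not_lt]
      constructor
      · rintro (⟨h1, h2⟩ | ⟨h1, h2⟩)
        · exact ⟨by linarith, by linarith⟩
        · exact ⟨h2, h1⟩
      · rintro ⟨h1, h2⟩
        exact Or.inr ⟨h2, h1⟩
    rw [hset, Real.volume_Ico, abs_sub_comm, abs_of_nonneg (sub_nonneg.2 h)]
  · have hset : {s : ℝ | Xor' (s < a) (s < b)} = Ico b a := by
      ext s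
      simp only [mem_setOf_eq, Xor', Xor, mem_Ico, not_lt]
      constructor
      · rintro (⟨h1, h2⟩ | ⟨h1, h2⟩)
        · exact ⟨h2, h1⟩
        · exact ⟨by linarith, by linarith⟩
      · rintro ⟨h1, h2⟩
        exact Or.inl ⟨h2, h1⟩
    rw [hset, Real.volume_Ico, abs_of_nonneg (sub_nonneg.2 h)]

end AuxLemmas

section AuxLemmas2

open MeasureTheory Set

lemma eucl_nontrivial {m : ℕ} (hm : 0 < m) : Nontrivial (Eucl m) := by
  refine nontrivial_of_ne (EuclideanSpace.single (⟨0, hm⟩ : Fin m) (1:ℝ)) 0 ?_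
  intro h
  have h2 := congrArg (fun v : Eucl m => v (⟨0, hm⟩ : Fin m)) h
  dsimp only at h2
  rw [EuclideanSpace.single_apply] at h2
  simp at h2

lemma aux_ball {m : ℕ} (hm : 0 < m) {c : ℝ} (hc : 0 ≤ c) :
    volume (Metric.ball (0 : Eucl m)
      ((c / (volume (Metric.ball (0 : Eucl m) 1)).toReal) ^ ((1:ℝ)/((m:ℕ):ℝ))))
    = ENNReal.ofReal c := by
  haveI : Nontrivial (Eucl m) := eucl_nontrivial hm
  set αB := volume (Metric.ball (0 : Eucl m) 1) with hαB
  have hα0 : αB ≠ 0 := (Metric.measure_ball_pos _ _ one_pos).ne'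
  have hαtop : αB ≠ ∞ := measure_ball_lt_top.ne
  have hαR : 0 < αB.toReal := ENNReal.toReal_pos hα0 hαtop
  have hq0 : 0 ≤ c / αB.toReal := div_nonneg hc hαR.le
  have hmne : ((m:ℕ):ℝ) ≠ 0 := Nat.cast_ne_zero.2 hm.ne'
  have hrt0 : 0 ≤ (c / αB.toReal) ^ ((1:ℝ)/((m:ℕ):ℝ)) := Real.rpow_nonneg hq0 _
  rw [Measure.addHaar_ball _ _ hrt0, finrank_euclideanSpace_fin]
  rw [← Real.rpow_natCast ((c / αB.toReal) ^ ((1:ℝ)/((m:ℕ):ℝ))) m, ← Real.rpow_mul hq0,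
    one_div, inv_mul_cancel₀ hmne, Real.rpow_one, ← hαB]
  rw [ENNReal.ofReal_div_of_pos hαR, ENNReal.ofReal_toReal hαtop]
  exact ENNReal.div_mul_cancel hα0 hαtop

lemma prod_section_lintegral {n : ℕ} {rr : ℝ → ℝ} (hrr : Measurable rr) {Jset : Set ℝ}
    (hJ : MeasurableSet Jset) (F : ℝ → ℝ≥0∞) (hF : Measurable F) :
    (∫⁻ y in {y : Eucl (n-1) × ℝ | y.2 ∈ Jset ∧ ‖y.1‖ < rr y.2}, F y.2)
      = ∫⁻ t in Jset, volume (Metric.ball (0 : Eucl (n-1)) (rr t)) * F t := by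
  set S : Set (Eucl (n-1) × ℝ) := {y | y.2 ∈ Jset ∧ ‖y.1‖ < rr y.2} with hS
  have hSm : MeasurableSet S := by
    have h : S = (Prod.snd ⁻¹' Jset) ∩ {y : Eucl (n-1) × ℝ | ‖y.1‖ < rr y.2} := rfl
    rw [h]
    exact (measurable_snd hJ).inter
      (measurableSet_lt measurable_fst.norm (hrr.comp measurable_snd))
  rw [← lintegral_indicator hSm]
  rw [Measure.volume_eq_prod]
  rw [lintegral_prod_symm (S.indicator fun y => F y.2)
    (((hF.comp measurable_snd).indicator hSm).aemeasurable)]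
  have hinner : ∀ t : ℝ, (∫⁻ y' : Eucl (n-1), S.indicator (fun y => F y.2) (y', t))
      = Jset.indicator (fun t => volume (Metric.ball (0 : Eucl (n-1)) (rr t)) * F t) t := by
    intro t
    by_cases ht : t ∈ Jset
    · rw [Set.indicator_of_mem ht]
      have heq : (fun y' : Eucl (n-1) => S.indicator (fun y : Eucl (n-1) × ℝ => F y.2) (y', t))
          = (Metric.ball (0 : Eucl (n-1)) (rr t)).indicator (fun _ => F t) := by
        funext y'
        by_cases hy : ‖y'‖ < rr t
        · rw [Set.indicator_of_mem (show (y', t) ∈ S from ⟨ht, hy⟩),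
            Set.indicator_of_mem (mem_ball_zero_iff.2 hy)]
        · rw [Set.indicator_of_notMem (show (y', t) ∉ S from fun hc => hy hc.2),
            Set.indicator_of_notMem (fun hc => hy (mem_ball_zero_iff.1 hc))]
      rw [heq, lintegral_indicator measurableSet_ball, setLIntegral_const, mul_comm]
    · rw [Set.indicator_of_notMem ht]
      have heq : (fun y' : Eucl (n-1) => S.indicator (fun y : Eucl (n-1) × ℝ => F y.2) (y', t))
          = fun _ => 0 := funext fun y' => Set.indicator_of_notMem (fun hc => ht hc.1) _
      rw [heq, lintegral_zero]
  simp_rw [hinner]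
  rw [lintegral_indicator hJ]

variable {n : ℕ} {C₀ δ₀ : ℝ} {Istar V : ℝ → ℝ} {T : ℝ} {r : ℝ → ℝ}
  {Ωs : Set (Eucl (n-1) × ℝ)}

lemma setup_ftc (hs : RearrangedSetup n C₀ δ₀ Istar V T r Ωs) {a b : ℝ} (hab : a ≤ b) :
    (∫⁻ t in Ioo a b, ENNReal.ofReal (Istar (V t))) = ENNReal.ofReal (V b - V a) := by
  have hw_eq : (fun t => Istar (V t)) = deriv V := funext fun t => ((hs.ode t).deriv).symm
  have hw_meas : Measurable fun t => Istar (V t) := by rw [hw_eq]; exact measurable_deriv V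
  obtain ⟨M, hM⟩ := hs.bdd
  have hnn : ∀ t, 0 ≤ Istar (V t) := fun t => hs.nonneg _
  have hIoc : IntegrableOn (fun t => Istar (V t)) (Ioc a b) volume := by
    apply Measure.integrableOn_of_bounded (M := M)
    · rw [Real.volume_Ioc]; exact ENNReal.ofReal_ne_top
    · exact hw_meas.aestronglyMeasurable
    · exact ae_of_all _ fun t => by
        rw [Real.norm_eq_abs, abs_of_nonneg (hnn t)]; exact hM _
  have hIoo : IntegrableOn (fun t => Istar (V t)) (Ioo a b) volume :=
    hIoc.mono_set Ioo_subset_Ioc_self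
  rw [← ofReal_integral_eq_lintegral_ofReal hIoo (ae_of_all _ hnn)]
  congr 1
  rw [← integral_Ioc_eq_integral_Ioo, ← intervalIntegral.integral_of_le hab]
  exact intervalIntegral.integral_eq_sub_of_hasDerivAt (fun t _ => hs.ode t)
    (intervalIntegrable_iff.2 (by rwa [uIoc_of_le hab]))

lemma setup_J (hsetup : RearrangedSetup n C₀ δ₀ Istar V T r Ωs) {ρ : ℝ}
    (h0 : 0 ≤ ρ) (h1 : ρ ≤ 1) :
    (∫⁻ t in {t : ℝ | V t < ρ} ∩ Ioo (-T) T, ENNReal.ofReal (Istar (V t)))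
      = ENNReal.ofReal ρ := by
  have hTT : -T ≤ T := by linarith [hsetup.T_pos]
  have hVcont : Continuous V := by
    rw [continuous_iff_continuousAt]
    exact fun t => (hsetup.ode t).continuousAt
  have hsm : StrictMonoOn V (Icc (-T) T) := by
    apply strictMonoOn_of_deriv_pos (convex_Icc _ _) hVcont.continuousOn
    intro x hx
    rw [interior_Icc] at hx
    rw [(hsetup.ode x).deriv]
    exact hsetup.pos _ (hsetup.V_open x hx)
  rcases eq_or_lt_of_le h0 with h0' | h0'
  · have hset : {t : ℝ | V t < ρ} ∩ Ioo (-T) T = ∅ := by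
      apply eq_empty_iff_forall_notMem.2
      rintro t ⟨hVt, ht⟩
      have := (hsetup.V_open t ht).1
      rw [mem_setOf_eq, ← h0'] at hVt
      linarith
    rw [hset]
    simp [← h0']
  rcases eq_or_lt_of_le h1 with h1' | h1'
  · have hset : {t : ℝ | V t < ρ} ∩ Ioo (-T) T = Ioo (-T) T := by
      apply inter_eq_right.2
      intro t ht
      rw [mem_setOf_eq, h1']
      exact (hsetup.V_open t ht).2
    rw [hset, setup_ftc hsetup hTT, hsetup.V_bot, hsetup.V_top, sub_zero, h1']
  · obtain ⟨τ, hτmem, hτ⟩ : ∃ τ ∈ Ioo (-T) T, V τ = ρ := by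
      have hiv := intermediate_value_Ioo hTT hVcont.continuousOn
      have hmem : ρ ∈ Ioo (V (-T)) (V T) := by
        rw [hsetup.V_bot, hsetup.V_top]; exact ⟨h0', h1'⟩
      obtain ⟨τ, hh1, hh2⟩ := hiv hmem
      exact ⟨τ, hh1, hh2⟩
    have hτIcc : τ ∈ Icc (-T) T := ⟨hτmem.1.le, hτmem.2.le⟩
    have hset : {t : ℝ | V t < ρ} ∩ Ioo (-T) T = Ioo (-T) τ := by
      ext t
      simp only [mem_inter_iff, mem_setOf_eq, mem_Ioo]
      constructor
      · rintro ⟨hVt, ht1, ht2⟩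
        refine ⟨ht1, ?_⟩
        by_contra hc
        push_neg at hc
        have hmono := hsm.monotoneOn hτIcc ⟨ht1.le, ht2.le⟩ hc
        rw [hτ] at hmono
        linarith
      · rintro ⟨ht1, ht2⟩
        have ht2T : t < T := ht2.trans hτmem.2
        refine ⟨?_, ht1, ht2T⟩
        have hlt := hsm ⟨ht1.le, ht2T.le⟩ hτIcc ht2
        rwa [hτ] at hlt
    rw [hset, setup_ftc hsetup hτmem.1.le, hsetup.V_bot, hτ, sub_zero]

end AuxLemmas2

/-- **The rearrangement is an `L¹` contraction** (Proposition 3.4). If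
`u₁, u₂ ∈ L¹(Ω)`, then `‖u₁* - u₂*‖_{L¹(Ω*)} ≤ ‖u₁ - u₂‖_{L¹(Ω)}`. -/
theorem rearrangement_L1_contraction
    (n : ℕ) (hn : 2 ≤ n)
    (Ω : Set (Eucl n)) (hΩ : DomainSetup n Ω)
    (C₀ δ₀ : ℝ) (Istar V : ℝ → ℝ) (T : ℝ) (r : ℝ → ℝ)
    (Ωs : Set (Eucl (n - 1) × ℝ))
    (hsetup : RearrangedSetup n C₀ δ₀ Istar V T r Ωs)
    (u₁ u₂ : Eucl n → ℝ) (hu₁ : Measurable u₁) (hu₂ : Measurable u₂)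
    (hu₁_int : MeasureTheory.IntegrableOn u₁ Ω)
    (hu₂_int : MeasureTheory.IntegrableOn u₂ Ω) :
    (∫⁻ y in Ωs, ENNReal.ofReal |rearr Ω V u₁ y - rearr Ω V u₂ y|) ≤
      ∫⁻ x in Ω, ENNReal.ofReal |u₁ x - u₂ x| := by
  classical
  have hΩ_vol := hΩ.vol_one
  have hΩm : MeasurableSet Ω := hΩ.isOpen.measurableSet
  -- basic continuity/measurability facts
  have hVcont : Continuous V := by
    rw [continuous_iff_continuousAt]
    exact fun t => (hsetup.ode t).continuousAt
  have hw_eq : (fun t => Istar (V t)) = deriv V := funext fun t => ((hsetup.ode t).deriv).symm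
  have hw_meas : Measurable fun t => Istar (V t) := by rw [hw_eq]; exact measurable_deriv V
  have hw_nn : ∀ t, 0 ≤ Istar (V t) := fun t => hsetup.nonneg _
  have hρ₁m : Measurable (distrib Ω u₁) := (distrib_antitone hΩ_vol u₁).measurable
  have hρ₂m : Measurable (distrib Ω u₂) := (distrib_antitone hΩ_vol u₂).measurable
  have hr_meas : Measurable r := by
    have hre : r = fun t => (Istar (V t) /
        (volume (Metric.ball (0 : Eucl (n - 1)) 1)).toReal) ^ ((1:ℝ)/((n:ℝ)-1)) :=
      funext hsetup.r_def
    have hexp : (0:ℝ) ≤ (1:ℝ)/((n:ℝ)-1) := by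
      have h2 : (2:ℝ) ≤ (n:ℝ) := by exact_mod_cast hn
      apply div_nonneg zero_le_one
      linarith
    rw [hre]
    exact (Real.continuous_rpow_const hexp).measurable.comp (hw_meas.div_const _)
  -- cast fact
  have hcast : ((n - 1 : ℕ) : ℝ) = (n : ℝ) - 1 := by
    have h1 : 1 ≤ n := by omega
    rw [Nat.cast_sub h1, Nat.cast_one]
  -- ball volumes
  have hball : ∀ t, volume (Metric.ball (0 : Eucl (n-1)) (r t))
      = ENNReal.ofReal (Istar (V t)) := by
    intro t
    rw [hsetup.r_def t, ← hcast]
    exact aux_ball (by omega) (hw_nn t)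
  -- the product xor set
  set D : Set (ℝ × ℝ) :=
    {p | Xor' (V p.1 < distrib Ω u₁ p.2) (V p.1 < distrib Ω u₂ p.2)} with hDdef
  have hDm : MeasurableSet D :=
    measurableSet_xor
      (measurableSet_lt (hVcont.measurable.comp measurable_fst) (hρ₁m.comp measurable_snd))
      (measurableSet_lt (hVcont.measurable.comp measurable_fst) (hρ₂m.comp measurable_snd))
  have hDindm : Measurable (D.indicator (1 : ℝ × ℝ → ℝ≥0∞)) := measurable_one.indicator hDm
  set F' : ℝ → ℝ≥0∞ := fun t => ∫⁻ s, D.indicator 1 (t, s) with hF'def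
  have hF'm : Measurable F' := hDindm.lintegral_prod_right'
  -- section xor sets measurable
  have hXorm : ∀ t, MeasurableSet {s : ℝ | Xor' (V t < distrib Ω u₁ s) (V t < distrib Ω u₂ s)} :=
    fun t => measurableSet_xor (measurableSet_lt measurable_const hρ₁m)
      (measurableSet_lt measurable_const hρ₂m)
  have hsec : ∀ t, (fun s => D.indicator (1 : ℝ × ℝ → ℝ≥0∞) (t, s))
      = ({s : ℝ | Xor' (V t < distrib Ω u₁ s) (V t < distrib Ω u₂ s)}).indicator 1 := by
    intro t; funext s
    simp only [hDdef, Set.indicator_apply, Set.mem_setOf_eq, Pi.one_apply]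
  -- F' equals |g₁ - g₂| on the interval
  have hF'_eq : ∀ t ∈ Ioo (-T) T,
      F' t = ENNReal.ofReal |profile Ω V u₁ t - profile Ω V u₂ t| := by
    intro t ht
    have hVt : V t ∈ Ioo (0:ℝ) 1 := hsetup.V_open t ht
    have h1 := setOf_lt_distrib_eq_Iio hΩ_vol hΩm hu₁ (v := V t) hVt
    have h2 := setOf_lt_distrib_eq_Iio hΩ_vol hΩm hu₂ (v := V t) hVt
    have e1 : ∀ s : ℝ, (V t < distrib Ω u₁ s) = (s < profile Ω V u₁ t) := by
      intro s
      have hh := Set.ext_iff.1 h1 s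
      simp only [mem_setOf_eq, mem_Iio] at hh
      exact propext hh
    have e2 : ∀ s : ℝ, (V t < distrib Ω u₂ s) = (s < profile Ω V u₂ t) := by
      intro s
      have hh := Set.ext_iff.1 h2 s
      simp only [mem_setOf_eq, mem_Iio] at hh
      exact propext hh
    calc F' t = ∫⁻ s, ({s : ℝ | Xor' (V t < distrib Ω u₁ s) (V t < distrib Ω u₂ s)}).indicator
          1 s := by simp only [hF'def]; rw [hsec t]
      _ = volume {s : ℝ | Xor' (V t < distrib Ω u₁ s) (V t < distrib Ω u₂ s)} :=
          lintegral_indicator_one (hXorm t)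
      _ = volume {s : ℝ | Xor' (s < profile Ω V u₁ t) (s < profile Ω V u₂ t)} := by
          congr 1; ext s; rw [mem_setOf_eq, mem_setOf_eq, e1 s, e2 s]
      _ = ENNReal.ofReal |profile Ω V u₁ t - profile Ω V u₂ t| := xor_volume _ _
  -- measurability of Ωs
  have hΩsm : MeasurableSet Ωs := by
    rw [hsetup.Ωs_def]
    have h : {y : Eucl (n-1) × ℝ | y.2 ∈ Ioo (-T) T ∧ ‖y.1‖ < r y.2}
        = (Prod.snd ⁻¹' Ioo (-T) T) ∩ {y : Eucl (n-1) × ℝ | ‖y.1‖ < r y.2} := rfl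
    rw [h]
    exact (measurable_snd measurableSet_Ioo).inter
      (measurableSet_lt measurable_fst.norm (hr_meas.comp measurable_snd))
  -- Step A
  have stepA : (∫⁻ y in Ωs, ENNReal.ofReal |rearr Ω V u₁ y - rearr Ω V u₂ y|)
      = ∫⁻ t in Ioo (-T) T, ENNReal.ofReal (Istar (V t)) * F' t := by
    have hcongr : (∫⁻ y in Ωs, ENNReal.ofReal |rearr Ω V u₁ y - rearr Ω V u₂ y|)
        = ∫⁻ y in Ωs, F' y.2 := by
      apply setLIntegral_congr_fun hΩsm
      intro y hy
      have hy2 : y.2 ∈ Ioo (-T) T := by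
        rw [hsetup.Ωs_def] at hy; exact hy.1
      dsimp only
      rw [hF'_eq y.2 hy2]
      rfl
    rw [hcongr, hsetup.Ωs_def, prod_section_lintegral hr_meas measurableSet_Ioo F' hF'm]
    refine setLIntegral_congr_fun measurableSet_Ioo (fun t ht => ?_)
    rw [hball t]
  -- Step B : pull the constant inside
  have hIndSecm : ∀ t, Measurable fun s => D.indicator (1 : ℝ × ℝ → ℝ≥0∞) (t, s) :=
    fun t => hDindm.comp measurable_prodMk_left
  have stepB : ∀ t, ENNReal.ofReal (Istar (V t)) * F' t
      = ∫⁻ s, ENNReal.ofReal (Istar (V t)) * D.indicator 1 (t, s) :=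
    fun t => (lintegral_const_mul _ (hIndSecm t)).symm
  -- Step swap
  have hswapm : Measurable (Function.uncurry fun t s =>
      ENNReal.ofReal (Istar (V t)) * D.indicator (1 : ℝ × ℝ → ℝ≥0∞) (t, s)) := by
    have h : (Function.uncurry fun t s =>
        ENNReal.ofReal (Istar (V t)) * D.indicator (1 : ℝ × ℝ → ℝ≥0∞) (t, s))
        = fun p : ℝ × ℝ => ENNReal.ofReal (Istar (V p.1)) * D.indicator 1 p := by
      funext p
      simp [Function.uncurry]
    rw [h]
    exact (ENNReal.measurable_ofReal.comp (hw_meas.comp measurable_fst)).mul hDindm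
  have stepSwap := lintegral_lintegral_swap (μ := volume.restrict (Ioo (-T) T))
    (ν := volume) hswapm.aemeasurable
  -- key computation for each fixed s
  have hkey : ∀ a b : ℝ, 0 ≤ a → a ≤ b → b ≤ 1 →
      (∫⁻ t in {t : ℝ | Xor' (V t < a) (V t < b)} ∩ Ioo (-T) T,
        ENNReal.ofReal (Istar (V t)))
        = ENNReal.ofReal (b - a) := by
    intro a b ha hab hb
    have hxorset : {t : ℝ | Xor' (V t < a) (V t < b)}
        = {t : ℝ | V t < b} \ {t : ℝ | V t < a} := by
      ext t
      simp only [mem_setOf_eq, Xor', Xor, mem_diff, not_lt]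
      constructor
      · rintro (⟨h1, h2⟩ | ⟨h1, h2⟩)
        · constructor <;> linarith
        · exact ⟨h1, h2⟩
      · rintro ⟨h1, h2⟩
        exact Or.inr ⟨h1, h2⟩
    have hDiffm : MeasurableSet (({t : ℝ | V t < b} \ {t : ℝ | V t < a}) ∩ Ioo (-T) T) :=
      (((measurableSet_lt hVcont.measurable measurable_const)).diff
        (measurableSet_lt hVcont.measurable measurable_const)).inter measurableSet_Ioo
    have hdecomp : {t : ℝ | V t < b} ∩ Ioo (-T) T
        = ({t : ℝ | V t < a} ∩ Ioo (-T) T)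
          ∪ (({t : ℝ | V t < b} \ {t : ℝ | V t < a}) ∩ Ioo (-T) T) := by
      ext t
      simp only [mem_inter_iff, mem_setOf_eq, mem_union, mem_diff]
      constructor
      · rintro ⟨h1, h2⟩
        by_cases hc : V t < a
        · exact Or.inl ⟨hc, h2⟩
        · exact Or.inr ⟨⟨h1, hc⟩, h2⟩
      · rintro (⟨h1, h2⟩ | ⟨⟨h1, _⟩, h2⟩)
        · exact ⟨lt_of_lt_of_le h1 hab, h2⟩
        · exact ⟨h1, h2⟩
    have hdisj : Disjoint ({t : ℝ | V t < a} ∩ Ioo (-T) T)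
        (({t : ℝ | V t < b} \ {t : ℝ | V t < a}) ∩ Ioo (-T) T) := by
      rw [Set.disjoint_left]
      rintro t ⟨h1, _⟩ ⟨⟨_, h2⟩, _⟩
      exact h2 h1
    have hunion := lintegral_union hDiffm hdisj
      (f := fun t => ENNReal.ofReal (Istar (V t))) (μ := volume)
    rw [← hdecomp, setup_J hsetup (ha.trans hab) hb, setup_J hsetup ha (hab.trans hb)] at hunion
    have h2 : ENNReal.ofReal a + ENNReal.ofReal (b - a) = ENNReal.ofReal b := by
      rw [← ENNReal.ofReal_add ha (by linarith)]
      congr 1; ring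
    rw [hxorset]
    rw [← ENNReal.add_right_inj (a := ENNReal.ofReal a) ENNReal.ofReal_ne_top]
    rw [← hunion]
    exact h2.symm
  -- inner integral at fixed s
  have hinner2 : ∀ s, (∫⁻ t in Ioo (-T) T,
      ENNReal.ofReal (Istar (V t)) * D.indicator 1 (t, s))
      = ENNReal.ofReal |distrib Ω u₁ s - distrib Ω u₂ s| := by
    intro s
    have hrw : (fun t => ENNReal.ofReal (Istar (V t)) * D.indicator (1 : ℝ × ℝ → ℝ≥0∞) (t, s))
        = ({t : ℝ | Xor' (V t < distrib Ω u₁ s) (V t < distrib Ω u₂ s)}).indicator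
            (fun t => ENNReal.ofReal (Istar (V t))) := by
      funext t
      simp only [hDdef, Set.indicator_apply, Set.mem_setOf_eq, Pi.one_apply, mul_ite,
        mul_one, mul_zero]
    have hXm : MeasurableSet {t : ℝ | Xor' (V t < distrib Ω u₁ s) (V t < distrib Ω u₂ s)} :=
      measurableSet_xor (measurableSet_lt hVcont.measurable measurable_const)
        (measurableSet_lt hVcont.measurable measurable_const)
    rw [hrw, lintegral_indicator hXm, Measure.restrict_restrict hXm]
    rcases le_total (distrib Ω u₁ s) (distrib Ω u₂ s) with h | h
    · rw [abs_sub_comm, abs_of_nonneg (sub_nonneg.2 h)]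
      exact hkey _ _ (distrib_nonneg' u₁ s) h (distrib_le_one hΩ_vol u₂ s)
    · have hsymm : {t : ℝ | Xor' (V t < distrib Ω u₁ s) (V t < distrib Ω u₂ s)}
          = {t : ℝ | Xor' (V t < distrib Ω u₂ s) (V t < distrib Ω u₁ s)} := by
        ext t
        simp only [mem_setOf_eq, Xor']
        exact ⟨Or.symm, Or.symm⟩
      rw [hsymm, abs_of_nonneg (sub_nonneg.2 h)]
      exact hkey _ _ (distrib_nonneg' u₂ s) h (distrib_le_one hΩ_vol u₁ s)
  -- Step D : comparison with symmetric differences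
  have stepD : ∀ s : ℝ, ENNReal.ofReal |distrib Ω u₁ s - distrib Ω u₂ s|
      ≤ volume (Ω ∩ {x | Xor' (s < u₁ x) (s < u₂ x)}) := by
    intro s
    have main : ∀ w₁ w₂ : Eucl n → ℝ, distrib Ω w₁ s ≤ distrib Ω w₂ s →
        ENNReal.ofReal (distrib Ω w₂ s - distrib Ω w₁ s)
          ≤ volume (Ω ∩ {x | Xor' (s < w₁ x) (s < w₂ x)}) := by
      intro w₁ w₂ hle
      rw [ENNReal.ofReal_sub _ (distrib_nonneg' w₁ s), ofReal_distrib hΩ_vol,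
        ofReal_distrib hΩ_vol, tsub_le_iff_left]
      calc volume (Ω ∩ {x | s < w₂ x})
          ≤ volume ((Ω ∩ {x | s < w₁ x}) ∪ ((Ω ∩ {x | s < w₂ x}) \ (Ω ∩ {x | s < w₁ x}))) := by
            apply measure_mono
            intro x hx
            by_cases hc : x ∈ Ω ∩ {x | s < w₁ x}
            · exact Or.inl hc
            · exact Or.inr ⟨hx, hc⟩
        _ ≤ volume (Ω ∩ {x | s < w₁ x})
            + volume ((Ω ∩ {x | s < w₂ x}) \ (Ω ∩ {x | s < w₁ x})) := measure_union_le _ _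
        _ ≤ volume (Ω ∩ {x | s < w₁ x}) + volume (Ω ∩ {x | Xor' (s < w₁ x) (s < w₂ x)}) := by
            apply add_le_add le_rfl
            apply measure_mono
            rintro x ⟨⟨hxΩ, h2⟩, hneg⟩
            exact ⟨hxΩ, Or.inr ⟨h2, fun hc => hneg ⟨hxΩ, hc⟩⟩⟩
    rcases le_total (distrib Ω u₁ s) (distrib Ω u₂ s) with h | h
    · rw [abs_sub_comm, abs_of_nonneg (sub_nonneg.2 h)]
      exact main u₁ u₂ h
    · rw [abs_of_nonneg (sub_nonneg.2 h)]
      have hm := main u₂ u₁ h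
      rwa [show Ω ∩ {x | Xor' (s < u₂ x) (s < u₁ x)}
          = Ω ∩ {x | Xor' (s < u₁ x) (s < u₂ x)} from by
        ext x
        simp only [mem_inter_iff, mem_setOf_eq, Xor', Xor]
        tauto] at hm
  -- Step E
  have stepE : (∫⁻ s, volume (Ω ∩ {x | Xor' (s < u₁ x) (s < u₂ x)}))
      = ∫⁻ x in Ω, ENNReal.ofReal |u₁ x - u₂ x| := by
    set D2 : Set (ℝ × Eucl n) := {p | Xor' (p.1 < u₁ p.2) (p.1 < u₂ p.2)} with hD2def
    have hD2m : MeasurableSet D2 :=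
      measurableSet_xor (measurableSet_lt measurable_fst (hu₁.comp measurable_snd))
        (measurableSet_lt measurable_fst (hu₂.comp measurable_snd))
    have hXsm : ∀ s : ℝ, MeasurableSet {x : Eucl n | Xor' (s < u₁ x) (s < u₂ x)} := fun s =>
      measurableSet_xor (measurableSet_lt measurable_const hu₁)
        (measurableSet_lt measurable_const hu₂)
    have h1 : ∀ s : ℝ, volume (Ω ∩ {x | Xor' (s < u₁ x) (s < u₂ x)})
        = ∫⁻ x in Ω, D2.indicator 1 (s, x) := by
      intro s
      have heq : (fun x => D2.indicator (1 : ℝ × Eucl n → ℝ≥0∞) (s, x))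
          = ({x : Eucl n | Xor' (s < u₁ x) (s < u₂ x)}).indicator 1 := by
        funext x
        simp only [hD2def, Set.indicator_apply, Set.mem_setOf_eq, Pi.one_apply]
      rw [heq, lintegral_indicator_one (hXsm s), Measure.restrict_apply (hXsm s), inter_comm]
    simp_rw [h1]
    have hsw : Measurable (Function.uncurry fun (s : ℝ) (x : Eucl n) =>
        D2.indicator (1 : ℝ × Eucl n → ℝ≥0∞) (s, x)) := by
      have h : (Function.uncurry fun (s : ℝ) (x : Eucl n) =>
          D2.indicator (1 : ℝ × Eucl n → ℝ≥0∞) (s, x)) = D2.indicator 1 := by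
        funext p
        simp [Function.uncurry]
      rw [h]
      exact measurable_one.indicator hD2m
    rw [lintegral_lintegral_swap hsw.aemeasurable]
    refine lintegral_congr fun x => ?_
    have heq : (fun s => D2.indicator (1 : ℝ × Eucl n → ℝ≥0∞) (s, x))
        = ({s : ℝ | Xor' (s < u₁ x) (s < u₂ x)}).indicator 1 := by
      funext s
      simp only [hD2def, Set.indicator_apply, Set.mem_setOf_eq, Pi.one_apply]
    rw [heq, lintegral_indicator_one
      (measurableSet_xor (P := fun s => s < u₁ x) (Q := fun s => s < u₂ x)
        measurableSet_Iio measurableSet_Iio), xor_volume]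
  -- final chain
  calc (∫⁻ y in Ωs, ENNReal.ofReal |rearr Ω V u₁ y - rearr Ω V u₂ y|)
      = ∫⁻ t in Ioo (-T) T, ENNReal.ofReal (Istar (V t)) * F' t := stepA
    _ = ∫⁻ t in Ioo (-T) T, ∫⁻ s, ENNReal.ofReal (Istar (V t)) * D.indicator 1 (t, s) :=
        lintegral_congr fun t => stepB t
    _ = ∫⁻ s, ∫⁻ t in Ioo (-T) T, ENNReal.ofReal (Istar (V t)) * D.indicator 1 (t, s) :=
        stepSwap
    _ = ∫⁻ s, ENNReal.ofReal |distrib Ω u₁ s - distrib Ω u₂ s| := lintegral_congr hinner2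
    _ ≤ ∫⁻ s, volume (Ω ∩ {x | Xor' (s < u₁ x) (s < u₂ x)}) := lintegral_mono stepD
    _ = ∫⁻ x in Ω, ENNReal.ofReal |u₁ x - u₂ x| := stepE
end
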